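/- arXiv:2405.03830 — 3 statements merged into one kernel-verified Lean document; each statement's English description precedes it below -/
import Mathlib

section
/- For a probability distribution p over n symbols, there exists a binary prefix tree whose expected leaf depth is strictly less than H(p) + 1, where H(p) is the binary entropy of p. -/
/-- A full binary (prefix) tree with symbols of type `α` at its leaves. -/
inductive BTree (α : Type) : Type where
  | leaf : α → BTree α
  | node : BTree α → BTree α → BTree α

namespace BTree

/-- The list of (leaf label, leaf depth) pairs, where depths are counted from
the offset `d` (the number of edges from the root when `d = 0`). -/
def leavesD {α : Type} : BTree α → ℕ → List (α × ℕ)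
  | leaf a, d => [(a, d)]
  | node l r, d => leavesD l (d + 1) ++ leavesD r (d + 1)

/-- The list of leaf labels of the tree. -/
def leafLabels {α : Type} (t : BTree α) : List α := (t.leavesD 0).map Prod.fst

/-- The height of the tree: the maximum number of edges on a root-to-leaf path. -/
def height {α : Type} : BTree α → ℕ
  | leaf _ => 0
  | node l r => max (height l) (height r) + 1

/-- Weighted (expected) leaf depth `∑ᵢ wᵢ dᵢ` of the tree. -/
def cost {α : Type} (w : α → ℝ) (t : BTree α) : ℝ :=
  ((t.leavesD 0).map (fun q => w q.1 * (q.2 : ℝ))).sum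

end BTree

section Aux

open BTree

variable {α : Type}

/-- Same label, depth at most. -/
def RR (x y : α × ℕ) : Prop := x.1 = y.1 ∧ x.2 ≤ y.2

instance : IsTrans (α × ℕ) (RR (α := α)) :=
  ⟨fun _ _ _ hab hbc => ⟨hab.1.trans hbc.1, hab.2.trans hbc.2⟩⟩

lemma leavesD_add (t : BTree α) (c d : ℕ) :
    t.leavesD (c + d) = (t.leavesD c).map (fun q => (q.1, q.2 + d)) := by
  induction t generalizing c with
  | leaf a => rfl
  | node l r ihl ihr =>
    show leavesD l (c + d + 1) ++ leavesD r (c + d + 1) = _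
    rw [show c + d + 1 = (c + 1) + d from by omega, ihl, ihr]
    simp [BTree.leavesD]

lemma rel_leavesD (t : BTree α) {c d : ℕ} (h : c ≤ d) :
    Multiset.Rel RR ((t.leavesD c : List (α × ℕ)) : Multiset (α × ℕ))
      ((t.leavesD d : List (α × ℕ)) : Multiset (α × ℕ)) := by
  have hd : t.leavesD d = (t.leavesD c).map fun q => (q.1, q.2 + (d - c)) := by
    rw [← leavesD_add]; congr 1; omega
  rw [hd, ← Multiset.map_coe]
  exact Multiset.rel_map_right.2
    (Multiset.rel_refl_of_refl_on fun x _ => ⟨rfl, Nat.le_add_right _ _⟩)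

lemma exists_min {β : Type} : ∀ (S : Multiset (β × ℕ)), S ≠ 0 →
    ∃ q ∈ S, ∀ r ∈ S, q.2 ≤ r.2 := by
  intro S
  induction S using Multiset.induction with
  | empty => simp
  | cons a S ih =>
    intro _
    rcases eq_or_ne S 0 with rfl | hS
    · exact ⟨a, Multiset.mem_cons_self _ _, by simp⟩
    · obtain ⟨q, hq, hmin⟩ := ih hS
      rcases le_total a.2 q.2 with hle | hle
      · refine ⟨a, Multiset.mem_cons_self _ _, fun r hr => ?_⟩
        rcases Multiset.mem_cons.1 hr with rfl | hr
        · exact le_refl _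
        · exact hle.trans (hmin r hr)
      · refine ⟨q, Multiset.mem_cons_of_mem hq, fun r hr => ?_⟩
        rcases Multiset.mem_cons.1 hr with rfl | hr
        · exact hle
        · exact hmin r hr

/-- Greedy dyadic bin-filling. -/
lemma split {β : Type} (c : ℕ) : ∀ (N : ℕ) (S : Multiset (β × ℕ)), S.card = N →
    ∀ B : ℕ, (∀ q ∈ S, 2 ^ (c - q.2) ∣ B) →
    ∃ S₁ S₂ : Multiset (β × ℕ), S = S₁ + S₂ ∧
      (S₁.map fun q => 2 ^ (c - q.2)).sum ≤ B ∧
      ((S₁.map fun q => 2 ^ (c - q.2)).sum = B ∨ S₂ = 0) := by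
  intro N
  induction N with
  | zero =>
    intro S hS B _
    have hS0 : S = 0 := Multiset.card_eq_zero.1 hS
    exact ⟨0, 0, by simp [hS0], by simp, Or.inr rfl⟩
  | succ N ih =>
    intro S hS B hdvd
    have hSne : S ≠ 0 := by intro h; simp [h] at hS
    obtain ⟨q₀, hq₀, hmin⟩ := exists_min S hSne
    obtain ⟨S', rfl⟩ := Multiset.exists_cons_of_mem hq₀
    rcases Nat.eq_zero_or_pos B with rfl | hB
    · exact ⟨0, q₀ ::ₘ S', by simp, by simp, Or.inl (by simp)⟩
    · have hw : 2 ^ (c - q₀.2) ∣ B := hdvd q₀ (Multiset.mem_cons_self _ _)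
      have hwle : 2 ^ (c - q₀.2) ≤ B := Nat.le_of_dvd hB hw
      obtain ⟨S₁, S₂, hsplit, hle, heq⟩ := ih S' (by simpa using hS) (B - 2 ^ (c - q₀.2))
        (fun q hq => Nat.dvd_sub (hdvd q (Multiset.mem_cons_of_mem hq))
          (pow_dvd_pow 2 (Nat.sub_le_sub_left (hmin q (Multiset.mem_cons_of_mem hq)) c)))
      refine ⟨q₀ ::ₘ S₁, S₂, by rw [hsplit, Multiset.cons_add], ?_, ?_⟩
      · simp only [Multiset.map_cons, Multiset.sum_cons]; omega
      · rcases heq with h | h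
        · left; simp only [Multiset.map_cons, Multiset.sum_cons]; omega
        · exact Or.inr h

/-- The multiset of target (label, depth-bound) pairs of a collection of
placed trees. -/
def target (S : Multiset (BTree α × ℕ)) : Multiset (α × ℕ) :=
  (S.map fun q => ((q.1.leavesD q.2 : List (α × ℕ)) : Multiset (α × ℕ))).sum

lemma target_add (A B : Multiset (BTree α × ℕ)) :
    target (A + B) = target A + target B := by
  simp [target]

lemma target_singleton (q : BTree α × ℕ) :
    target {q} = ↑(q.1.leavesD q.2) := by
  simp [target]

lemma map_shift_target_dec (A : Multiset (BTree α × ℕ)) (hA : ∀ q ∈ A, 1 ≤ q.2) :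
    (target (A.map fun q => (q.1, q.2 - 1))).map (fun q => (q.1, q.2 + 1)) = target A := by
  induction A using Multiset.induction with
  | empty => simp [target]
  | cons a A ih =>
    have ha : 1 ≤ a.2 := hA a (Multiset.mem_cons_self _ _)
    have ihA := ih (fun q hq => hA q (Multiset.mem_cons_of_mem hq))
    simp only [Multiset.map_cons, target, Multiset.sum_cons, Multiset.map_add] at *
    rw [ihA]
    congr 1
    rw [Multiset.map_coe, ← leavesD_add, Nat.sub_add_cancel ha]

lemma rel_fst_eq {s t : Multiset (α × ℕ)} (h : Multiset.Rel RR s t) :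
    s.map Prod.fst = t.map Prod.fst := by
  induction h with
  | zero => rfl
  | cons hab _ ih => simp only [Multiset.map_cons, ih, hab.1]

lemma rel_sum_le {s t : Multiset (α × ℕ)} {f : α × ℕ → ℝ}
    (hf : ∀ a b, RR a b → f a ≤ f b) (h : Multiset.Rel RR s t) :
    (s.map f).sum ≤ (t.map f).sum := by
  induction h with
  | zero => exact le_refl _
  | cons hab _ ih =>
    simp only [Multiset.map_cons, Multiset.sum_cons]
    exact add_le_add (hf _ _ hab) ih

/-- Kraft construction: from a nonempty collection of placed subtrees whose
(natural-number) Kraft sum is at most `2^c`, build a single tree whose leaves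
are the union of the subtrees' leaves at depths at most the prescribed ones. -/

lemma build_single {α : Type} (q : BTree α × ℕ) :
    ∃ T : BTree α, Multiset.Rel RR (↑(T.leavesD 0)) (target ({q} : Multiset (BTree α × ℕ))) :=
  ⟨q.1, by rw [target_singleton]; exact rel_leavesD q.1 (Nat.zero_le _)⟩

/-- Kraft construction: from a nonempty collection of placed subtrees whose
(natural-number) Kraft sum is at most `2^c`, build a single tree whose leaves
are the union of the subtrees' leaves, at depths at most the prescribed ones. -/
lemma build {α : Type} : ∀ (c : ℕ) (S : Multiset (BTree α × ℕ)), S ≠ 0 →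
    (∀ q ∈ S, q.2 ≤ c) →
    (S.map fun q => 2 ^ (c - q.2)).sum ≤ 2 ^ c →
    ∃ T : BTree α, Multiset.Rel RR (↑(T.leavesD 0)) (target S) := by
  intro c
  induction c with
  | zero =>
    intro S hne _ hK
    obtain ⟨a, ha⟩ := Multiset.exists_mem_of_ne_zero hne
    obtain ⟨S', rfl⟩ := Multiset.exists_cons_of_mem ha
    rcases eq_or_ne S' 0 with rfl | hS'
    · exact build_single a
    · exfalso
      obtain ⟨b, hb⟩ := Multiset.exists_mem_of_ne_zero hS'
      obtain ⟨S'', rfl⟩ := Multiset.exists_cons_of_mem hb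
      simp only [Multiset.map_cons, Multiset.sum_cons, Nat.zero_sub, pow_zero] at hK
      omega
  | succ c ih =>
    intro S hne hd hK
    obtain ⟨a, ha⟩ := Multiset.exists_mem_of_ne_zero hne
    obtain ⟨S', rfl⟩ := Multiset.exists_cons_of_mem ha
    rcases eq_or_ne S' 0 with rfl | hS'
    · exact build_single a
    obtain ⟨b, hb⟩ := Multiset.exists_mem_of_ne_zero hS'
    obtain ⟨S'', rfl⟩ := Multiset.exists_cons_of_mem hb
    -- every depth is at least 1
    have hpos : ∀ q ∈ (a ::ₘ b ::ₘ S''), 1 ≤ q.2 := by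
      intro q hq
      by_contra h
      have hq0 : q.2 = 0 := by omega
      obtain ⟨S₀, hS₀⟩ := Multiset.exists_cons_of_mem hq
      have hS₀ne : S₀ ≠ 0 := by
        intro h0
        rw [h0] at hS₀
        have := congrArg Multiset.card hS₀
        simp at this
      obtain ⟨r, hr⟩ := Multiset.exists_mem_of_ne_zero hS₀ne
      obtain ⟨S₁, rfl⟩ := Multiset.exists_cons_of_mem hr
      rw [hS₀] at hK
      simp only [Multiset.map_cons, Multiset.sum_cons, hq0, Nat.sub_zero] at hK
      have h1 : 1 ≤ 2 ^ (c + 1 - r.2) := Nat.one_le_two_pow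
      omega
    -- the common construction from a balanced split
    have key : ∀ A B : Multiset (BTree α × ℕ), (a ::ₘ b ::ₘ S'') = A + B →
        A ≠ 0 → B ≠ 0 →
        (A.map fun q => 2 ^ (c + 1 - q.2)).sum ≤ 2 ^ c →
        (B.map fun q => 2 ^ (c + 1 - q.2)).sum ≤ 2 ^ c →
        ∃ T : BTree α, Multiset.Rel RR (↑(T.leavesD 0)) (target (a ::ₘ b ::ₘ S'')) := by
      intro A B hAB hA hB hKA hKB
      have hposA : ∀ q ∈ A, 1 ≤ q.2 :=
        fun q hq => hpos q (hAB ▸ Multiset.mem_add.2 (Or.inl hq))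
      have hposB : ∀ q ∈ B, 1 ≤ q.2 :=
        fun q hq => hpos q (hAB ▸ Multiset.mem_add.2 (Or.inr hq))
      have hdA : ∀ q ∈ A, q.2 ≤ c + 1 :=
        fun q hq => hd q (hAB ▸ Multiset.mem_add.2 (Or.inl hq))
      have hdB : ∀ q ∈ B, q.2 ≤ c + 1 :=
        fun q hq => hd q (hAB ▸ Multiset.mem_add.2 (Or.inr hq))
      have step : ∀ C : Multiset (BTree α × ℕ), C ≠ 0 → (∀ q ∈ C, 1 ≤ q.2) →
          (∀ q ∈ C, q.2 ≤ c + 1) →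
          (C.map fun q => 2 ^ (c + 1 - q.2)).sum ≤ 2 ^ c →
          ∃ T : BTree α, Multiset.Rel RR (↑(T.leavesD 1)) (target C) := by
        intro C hC hposC hdC hKC
        have hC'ne : (C.map fun q => (q.1, q.2 - 1)) ≠ 0 := by
          simpa [Multiset.map_eq_zero] using hC
        have hdC' : ∀ q ∈ C.map fun q => (q.1, q.2 - 1), q.2 ≤ c := by
          intro q hq
          obtain ⟨r, hr, rfl⟩ := Multiset.mem_map.1 hq
          have := hdC r hr
          simp only []
          omega
        have hKC' : ((C.map fun q => (q.1, q.2 - 1)).map fun q => 2 ^ (c - q.2)).sum ≤ 2 ^ c := by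
          rw [Multiset.map_map]
          calc (C.map fun q => 2 ^ (c - (q.2 - 1))).sum
              = (C.map fun q => 2 ^ (c + 1 - q.2)).sum := by
                refine congrArg Multiset.sum (Multiset.map_congr rfl fun q hq => ?_)
                have := hposC q hq
                congr 1
                omega
            _ ≤ 2 ^ c := hKC
        obtain ⟨T, hT⟩ := ih (C.map fun q => (q.1, q.2 - 1)) hC'ne hdC' hKC'
        refine ⟨T, ?_⟩
        have h1 : T.leavesD 1 = (T.leavesD 0).map fun q => (q.1, q.2 + 1) := by
          simpa using leavesD_add T 0 1
        rw [h1, ← Multiset.map_coe, ← map_shift_target_dec C hposC]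
        exact Multiset.rel_map.2 (hT.mono fun x _ y _ h => ⟨h.1, Nat.add_le_add_right h.2 1⟩)
      obtain ⟨T₁, hT₁⟩ := step A hA hposA hdA hKA
      obtain ⟨T₂, hT₂⟩ := step B hB hposB hdB hKB
      refine ⟨BTree.node T₁ T₂, ?_⟩
      rw [hAB, target_add]
      have e1 : (BTree.node T₁ T₂).leavesD 0 = T₁.leavesD 1 ++ T₂.leavesD 1 := rfl
      rw [e1, ← Multiset.coe_add]
      exact Multiset.Rel.add hT₁ hT₂
    -- get the split
    have hdvd : ∀ q ∈ (a ::ₘ b ::ₘ S''), 2 ^ (c + 1 - q.2) ∣ 2 ^ c :=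
      fun q hq => pow_dvd_pow 2 (by have := hpos q hq; omega)
    obtain ⟨A, B, hAB, hle, heq⟩ :=
      split (c + 1) (a ::ₘ b ::ₘ S'').card (a ::ₘ b ::ₘ S'') rfl (2 ^ c) hdvd
    rcases eq_or_ne B 0 with rfl | hBne
    · -- the whole Kraft sum is at most 2^c : split off the first element
      rw [add_zero] at hAB
      have hle' : (Multiset.map (fun q => 2 ^ (c + 1 - q.2)) (a ::ₘ b ::ₘ S'')).sum ≤ 2 ^ c := by
        rw [hAB]; exact hle
      simp only [Multiset.map_cons, Multiset.sum_cons] at hle'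
      refine key {a} (b ::ₘ S'') (Multiset.singleton_add a (b ::ₘ S'')).symm (by simp) (by simp)
        ?_ ?_
      · have hwa : 2 ^ (c + 1 - a.2) ≤ 2 ^ c :=
          Nat.le_of_dvd (Nat.two_pow_pos c) (hdvd a (Multiset.mem_cons_self _ _))
        simpa using hwa
      · simp only [Multiset.map_cons, Multiset.sum_cons]
        exact le_trans (Nat.le_add_left _ _) hle'
    · -- balanced split: the first bin is exactly full
      have hsumA : (A.map fun q => 2 ^ (c + 1 - q.2)).sum = 2 ^ c := by tauto
      have hAne : A ≠ 0 := by
        intro h0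
        rw [h0] at hsumA
        simp at hsumA
        have : 0 < 2 ^ c := Nat.two_pow_pos c
        omega
      have hKB : (B.map fun q => 2 ^ (c + 1 - q.2)).sum ≤ 2 ^ c := by
        rw [hAB, Multiset.map_add, Multiset.sum_add, hsumA] at hK
        rw [pow_succ] at hK
        omega
      exact key A B hAB hAne hBne hle hKB

lemma target_leaf_list {ι : Type} (l : List ι) (g : ι → ℕ) :
    target ((l.map fun i => (BTree.leaf i, g i) : List (BTree ι × ℕ)) : Multiset (BTree ι × ℕ)) =
      ((l.map fun i => (i, g i) : List (ι × ℕ)) : Multiset (ι × ℕ)) := by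
  induction l with
  | nil => simp [target]
  | cons a l ih =>
    simp only [List.map_cons, ← Multiset.cons_coe, target, Multiset.map_cons,
      Multiset.sum_cons] at *
    rw [ih]
    show ((([(a, g a)] : List (ι × ℕ)) : Multiset (ι × ℕ)) + _) = _
    rw [Multiset.coe_singleton, Multiset.singleton_add]

end Aux

/-- Noiseless coding upper bound: for a probability distribution `p` over `n`
symbols there exists a binary prefix tree whose expected leaf depth is strictly
less than `H(p) + 1`, where `H(p) = -∑ᵢ pᵢ log₂ pᵢ` is the binary entropy. -/
theorem exists_tree_expected_depth_lt_entropy_add_one (n : ℕ) (p : Fin n → ℝ)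
    (hp : ∀ i, 0 < p i) (hsum : ∑ i, p i = 1) :
    ∃ t : BTree (Fin n), t.leafLabels.Perm (List.finRange n) ∧
      BTree.cost p t < (-∑ i, p i * Real.logb 2 (p i)) + 1 := by
  classical
  have hn : n ≠ 0 := by
    rintro rfl
    simp at hsum
  haveI : Nonempty (Fin n) := Fin.pos_iff_nonempty.1 (Nat.pos_of_ne_zero hn)
  set ℓ : Fin n → ℕ := fun i => ⌈Real.logb 2 (p i)⁻¹⌉₊ with hℓ
  have hple : ∀ i, p i ≤ 1 := fun i =>
    hsum ▸ Finset.single_le_sum (fun j _ => (hp j).le) (Finset.mem_univ i)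
  have hlog0 : ∀ i, 0 ≤ Real.logb 2 (p i)⁻¹ := fun i =>
    Real.logb_nonneg one_lt_two (one_le_inv_iff₀.2 ⟨hp i, hple i⟩)
  have hkrafti : ∀ i, ((2:ℝ) ^ (ℓ i))⁻¹ ≤ p i := by
    intro i
    have h1 : Real.logb 2 (p i)⁻¹ ≤ (ℓ i : ℝ) := Nat.le_ceil _
    have h2 : (p i)⁻¹ ≤ (2:ℝ) ^ (ℓ i) := by
      calc (p i)⁻¹ = (2:ℝ) ^ Real.logb 2 (p i)⁻¹ :=
            (Real.rpow_logb two_pos (by norm_num) (inv_pos.2 (hp i))).symm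
        _ ≤ (2:ℝ) ^ ((ℓ i : ℕ) : ℝ) :=
            Real.rpow_le_rpow_of_exponent_le one_le_two h1
        _ = (2:ℝ) ^ (ℓ i) := Real.rpow_natCast 2 (ℓ i)
    have := inv_anti₀ (inv_pos.2 (hp i)) h2
    rwa [inv_inv] at this
  set c : ℕ := Finset.univ.sup ℓ with hcdef
  have hc : ∀ i, ℓ i ≤ c := fun i => Finset.le_sup (Finset.mem_univ i)
  set S : Multiset (BTree (Fin n) × ℕ) :=
    (((List.finRange n).map fun i => (BTree.leaf i, ℓ i) : List (BTree (Fin n) × ℕ)) :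
      Multiset (BTree (Fin n) × ℕ)) with hSdef
  have hSne : S ≠ 0 := by
    rw [hSdef, Ne, Multiset.coe_eq_zero, List.map_eq_nil_iff]
    intro h
    have := congrArg List.length h
    simp at this
    exact hn this
  have hdS : ∀ q ∈ S, q.2 ≤ c := by
    intro q hq
    rw [hSdef, Multiset.mem_coe, List.mem_map] at hq
    obtain ⟨i, _, rfl⟩ := hq
    exact hc i
  have hmapsum : (S.map fun q => 2 ^ (c - q.2)).sum = ∑ i, 2 ^ (c - ℓ i) := by
    rw [Fin.sum_univ_def, hSdef]
    simp only [Multiset.map_coe, Multiset.sum_coe, List.map_map]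
    rfl
  have hKN : (S.map fun q => 2 ^ (c - q.2)).sum ≤ 2 ^ c := by
    rw [hmapsum]
    have hreal : (∑ i, ((2:ℝ)) ^ (c - ℓ i)) ≤ (2:ℝ) ^ c := by
      have hterm : ∀ i, ((2:ℝ)) ^ (c - ℓ i) ≤ 2 ^ c * p i := by
        intro i
        have h2 : ((2:ℝ)) ^ (c - ℓ i) * 2 ^ (ℓ i) = 2 ^ c := by
          rw [← pow_add]
          congr 1
          have := hc i
          omega
        have h2pos : (0:ℝ) < 2 ^ (ℓ i) := by positivity
        have heq : ((2:ℝ)) ^ (c - ℓ i) = 2 ^ c * ((2:ℝ) ^ (ℓ i))⁻¹ := by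
          field_simp
          linarith [h2]
        rw [heq]
        exact mul_le_mul_of_nonneg_left (hkrafti i) (by positivity)
      calc (∑ i, ((2:ℝ)) ^ (c - ℓ i)) ≤ ∑ i, (2:ℝ) ^ c * p i :=
            Finset.sum_le_sum fun i _ => hterm i
        _ = 2 ^ c := by rw [← Finset.mul_sum, hsum, mul_one]
    exact_mod_cast hreal
  obtain ⟨T, hT⟩ := build c S hSne hdS hKN
  have htarget : target S = (((List.finRange n).map fun i => ((i : Fin n), ℓ i) :
      List (Fin n × ℕ)) : Multiset (Fin n × ℕ)) := by
    rw [hSdef]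
    exact target_leaf_list (List.finRange n) ℓ
  rw [htarget] at hT
  refine ⟨T, ?_, ?_⟩
  · -- permutation of labels
    rw [← Multiset.coe_eq_coe]
    have hfst := rel_fst_eq hT
    rw [Multiset.map_coe, Multiset.map_coe, List.map_map] at hfst
    show (((T.leavesD 0).map Prod.fst : List (Fin n)) : Multiset (Fin n)) = _
    rw [hfst]
    congr 1
    show List.map (fun i => i) (List.finRange n) = List.finRange n
    exact List.map_id' (List.finRange n)
  · -- cost bound
    have hf : ∀ a b : Fin n × ℕ, RR a b → p a.1 * (a.2 : ℝ) ≤ p b.1 * (b.2 : ℝ) := by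
      intro a b h
      rw [h.1]
      exact mul_le_mul_of_nonneg_left (Nat.cast_le.2 h.2) (hp b.1).le
    have hcost := rel_sum_le hf hT
    rw [Multiset.map_coe, Multiset.sum_coe, Multiset.map_coe, Multiset.sum_coe,
      List.map_map] at hcost
    have hcost' : BTree.cost p T ≤ ∑ i, p i * (ℓ i : ℝ) := by
      rw [BTree.cost, Fin.sum_univ_def]
      exact le_of_le_of_eq hcost rfl
    refine lt_of_le_of_lt hcost' ?_
    have hstep : ∀ i, p i * (ℓ i : ℝ) < p i * (Real.logb 2 (p i)⁻¹ + 1) := fun i =>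
      mul_lt_mul_of_pos_left (Nat.ceil_lt_add_one (hlog0 i)) (hp i)
    calc (∑ i, p i * (ℓ i : ℝ)) < ∑ i, p i * (Real.logb 2 (p i)⁻¹ + 1) :=
          Finset.sum_lt_sum_of_nonempty Finset.univ_nonempty fun i _ => hstep i
      _ = (-∑ i, p i * Real.logb 2 (p i)) + 1 := by
          simp only [Real.logb_inv, mul_add, mul_one, mul_neg, Finset.sum_add_distrib,
            Finset.sum_neg_distrib, hsum]
end

section
/- Huffman's algorithm produces a binary prefix tree of minimum weighted expected leaf depth: for weights w₁,…,wₙ > 0, the tree obtained by repeatedly merging the two smallest-weight subtrees minimizes ∑ᵢ wᵢ dᵢ over all full binary trees with these symbols at the leaves. -/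
/-- The total weight of a weighted tree: sum of the weights of its leaves. -/
def treeWeight {α : Type} (w : α → ℝ) : BTree α → ℝ
  | .leaf a => w a
  | .node l r => treeWeight w l + treeWeight w r

/-- One step of Huffman's algorithm on a forest: replace two trees of smallest
weight by a new tree having them as children. -/
inductive HuffStep {α : Type} (w : α → ℝ) :
    Multiset (BTree α) → Multiset (BTree α) → Prop
  | step (t₁ t₂ : BTree α) (F : Multiset (BTree α))
      (h₁ : ∀ u ∈ F, treeWeight w t₁ ≤ treeWeight w u)
      (h₂ : ∀ u ∈ F, treeWeight w t₂ ≤ treeWeight w u) :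
      HuffStep w (t₁ ::ₘ t₂ ::ₘ F) (BTree.node t₁ t₂ ::ₘ F)

namespace BTree

variable {α β : Type}

theorem leavesD_shift (t : BTree α) (d : ℕ) :
    t.leavesD d = (t.leavesD 0).map (fun q => (q.1, q.2 + d)) := by
  induction t generalizing d with
  | leaf a => simp [leavesD]
  | node l r ihl ihr =>
    simp only [leavesD, List.map_append]
    rw [ihl (d+1), ihr (d+1), ihl 1, ihr 1, List.map_map, List.map_map]
    have : ((fun q : α × ℕ => (q.1, q.2 + d)) ∘ fun q : α × ℕ => (q.1, q.2 + 1))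
        = fun q : α × ℕ => (q.1, q.2 + (d + 1)) := by
      funext q; simp [Function.comp]; omega
    rw [this]

theorem mem_leavesD_shift {t : BTree α} {x : α} {d : ℕ} (h : (x, d) ∈ t.leavesD 0) (e : ℕ) :
    (x, d + e) ∈ t.leavesD e := by
  rw [leavesD_shift t e]
  exact List.mem_map_of_mem h

theorem leafLabels_node (l r : BTree α) :
    (node l r).leafLabels = l.leafLabels ++ r.leafLabels := by
  simp only [leafLabels, leavesD, List.map_append]
  rw [leavesD_shift l 1, leavesD_shift r 1, List.map_map, List.map_map]
  rfl

theorem leafLabels_ne_nil (t : BTree α) : t.leafLabels ≠ [] := by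
  induction t with
  | leaf a => simp [leafLabels, leavesD]
  | node l r ihl ihr =>
    simp only [leafLabels_node, ne_eq, List.append_eq_nil_iff]
    intro h; exact ihl h.1

theorem depth_le_height {t : BTree α} {x : α} {d e : ℕ} (h : (x, d) ∈ t.leavesD e) :
    d ≤ t.height + e := by
  induction t generalizing e with
  | leaf a => simp [leavesD] at h; simp [height]; omega
  | node l r ihl ihr =>
    simp only [leavesD, List.mem_append] at h
    rcases h with h | h
    · have := ihl h; simp [height]; omega
    · have := ihr h; simp [height]; omega

def costD (w : α → ℝ) (t : BTree α) (d : ℕ) : ℝ :=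
  ((t.leavesD d).map (fun q => w q.1 * (q.2 : ℝ))).sum

theorem cost_eq_costD (w : α → ℝ) (t : BTree α) : cost w t = costD w t 0 := rfl

theorem costD_leaf (w : α → ℝ) (a : α) (d : ℕ) : costD w (leaf a) d = w a * d := by
  simp [costD, leavesD]

theorem costD_node (w : α → ℝ) (l r : BTree α) (d : ℕ) :
    costD w (node l r) d = costD w l (d+1) + costD w r (d+1) := by
  simp [costD, leavesD]

theorem costD_eq (w : α → ℝ) (t : BTree α) (d : ℕ) :
    costD w t d = cost w t + d * treeWeight w t := by
  induction t generalizing d with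
  | leaf a => simp [costD_leaf, cost_eq_costD, treeWeight]; ring
  | node l r ihl ihr =>
    rw [costD_node, ihl, ihr,
      show cost w (node l r) = costD w (node l r) 0 from rfl, costD_node, ihl, ihr]
    simp only [treeWeight]
    push_cast
    ring

def bmap (f : α → β) : BTree α → BTree β
  | leaf a => leaf (f a)
  | node l r => node (bmap f l) (bmap f r)

theorem leavesD_bmap (f : α → β) (t : BTree α) (d : ℕ) :
    (bmap f t).leavesD d = (t.leavesD d).map (Prod.map f id) := by
  induction t generalizing d with
  | leaf a => simp [bmap, leavesD]
  | node l r ihl ihr => simp [bmap, leavesD, ihl, ihr]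

theorem leafLabels_bmap (f : α → β) (t : BTree α) :
    (bmap f t).leafLabels = t.leafLabels.map f := by
  simp [leafLabels, leavesD_bmap, List.map_map]

theorem cost_bmap (w : β → ℝ) (f : α → β) (t : BTree α) :
    cost w (bmap f t) = ((t.leavesD 0).map (fun q => w (f q.1) * (q.2 : ℝ))).sum := by
  simp [cost, leavesD_bmap, List.map_map]
  rfl

def graft : BTree (BTree α) → BTree α
  | leaf t => t
  | node l r => node (graft l) (graft r)

theorem graft_bmap_leaf (t : BTree α) : graft (bmap leaf t) = t := by
  induction t with
  | leaf a => rfl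
  | node l r ihl ihr => simp [bmap, graft, ihl, ihr]

theorem costD_graft (w : α → ℝ) (G : BTree (BTree α)) (d : ℕ) :
    costD w (graft G) d
      = costD (treeWeight w) G d + (G.leafLabels.map (cost w)).sum := by
  induction G generalizing d with
  | leaf u => simp [graft, costD_eq, cost, leavesD, leafLabels, treeWeight]; ring
  | node l r ihl ihr =>
    simp only [graft, costD_node, ihl, ihr, leafLabels_node, List.map_append, List.sum_append]
    ring

inductive Sub (s : BTree α) : BTree α → Prop
  | refl : Sub s s
  | left {l r : BTree α} : Sub s l → Sub s (node l r)
  | right {l r : BTree α} : Sub s r → Sub s (node l r)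

theorem Sub.bmap {s t : BTree α} (f : α → β) (h : Sub s t) :
    Sub (BTree.bmap f s) (BTree.bmap f t) := by
  induction h with
  | refl => exact Sub.refl
  | left _ ih => exact Sub.left ih
  | right _ ih => exact Sub.right ih

theorem Sub.labels_sublist {s t : BTree α} (h : Sub s t) :
    s.leafLabels.Sublist t.leafLabels := by
  induction h with
  | refl => exact List.Sublist.refl _
  | left _ ih => rw [leafLabels_node]; exact ih.trans (List.sublist_append_left _ _)
  | right _ ih => rw [leafLabels_node]; exact ih.trans (List.sublist_append_right _ _)

inductive Repl (s s' : BTree α) : BTree α → BTree α → Prop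
  | base : Repl s s' s s'
  | left {l l' r : BTree α} : Repl s s' l l' → Repl s s' (node l r) (node l' r)
  | right {l r r' : BTree α} : Repl s s' r r' → Repl s s' (node l r) (node l r')

theorem Sub.exists_repl {s t : BTree α} (h : Sub s t) (s' : BTree α) :
    ∃ t', Repl s s' t t' := by
  induction h with
  | refl => exact ⟨s', Repl.base⟩
  | left _ ih => obtain ⟨l', hl⟩ := ih; exact ⟨_, Repl.left hl⟩
  | right _ ih => obtain ⟨r', hr⟩ := ih; exact ⟨_, Repl.right hr⟩

theorem Repl.sub {s s' t t' : BTree α} (h : Repl s s' t t') : Sub s' t' := by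
  induction h with
  | base => exact Sub.refl
  | left _ ih => exact Sub.left ih
  | right _ ih => exact Sub.right ih

theorem Repl.labels {s s' t t' : BTree α} (h : Repl s s' t t') :
    (t.leafLabels : Multiset α) + (s'.leafLabels : Multiset α)
      = (t'.leafLabels : Multiset α) + (s.leafLabels : Multiset α) := by
  induction h with
  | base => rw [add_comm]
  | left _ ih =>
    have h1 : ∀ u v : BTree α, ((node u v).leafLabels : Multiset α)
        = (u.leafLabels : Multiset α) + (v.leafLabels : Multiset α) := by
      intro u v; rw [leafLabels_node]; rfl
    rw [h1, h1, add_right_comm, ih, add_right_comm]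
  | right _ ih =>
    have h1 : ∀ u v : BTree α, ((node u v).leafLabels : Multiset α)
        = (u.leafLabels : Multiset α) + (v.leafLabels : Multiset α) := by
      intro u v; rw [leafLabels_node]; rfl
    rw [h1, h1, add_assoc, ih, add_assoc]

theorem Repl.cost {s s' t t' : BTree α} (w : α → ℝ) (h : Repl s s' t t') (d : ℕ) :
    ∃ k : ℕ, costD w t' d + costD w s k = costD w t d + costD w s' k := by
  induction h generalizing d with
  | base => exact ⟨d, by rw [add_comm]⟩
  | left _ ih =>
    obtain ⟨k, hk⟩ := ih (d+1)
    exact ⟨k, by rw [costD_node, costD_node]; linarith⟩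
  | right _ ih =>
    obtain ⟨k, hk⟩ := ih (d+1)
    exact ⟨k, by rw [costD_node, costD_node]; linarith⟩


attribute [local instance] Classical.decEq

theorem mem_map_fst {p : α × ℕ} {L : List (α × ℕ)} (hp : p ∈ L) :
    p.1 ∈ L.map Prod.fst := List.mem_map_of_mem hp

section Swap

variable (w : α → ℝ) (u z : α)

theorem sum_swap_aux0 (L : List (α × ℕ)) (h : ∀ q ∈ L, q.1 ≠ u ∧ q.1 ≠ z) :
    (L.map fun q => w (Equiv.swap u z q.1) * (q.2 : ℝ)).sum
      = (L.map fun q => w q.1 * (q.2 : ℝ)).sum := by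
  induction L with
  | nil => simp
  | cons q L ih =>
    obtain ⟨h1, h2⟩ := h q List.mem_cons_self
    simp only [List.map_cons, List.sum_cons, Equiv.swap_apply_of_ne_of_ne h1 h2,
      ih (fun p hp => h p (List.mem_cons_of_mem _ hp))]

theorem sum_swap_aux1 (hne : u ≠ z) : ∀ (L : List (α × ℕ)) (dz : ℕ),
    (z, dz) ∈ L → (∀ q ∈ L, q.1 ≠ u) → (L.map Prod.fst).Nodup →
    (L.map fun q => w (Equiv.swap u z q.1) * (q.2 : ℝ)).sum
      = (L.map fun q => w q.1 * (q.2 : ℝ)).sum + (w u - w z) * dz := by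
  intro L
  induction L with
  | nil => intro dz h; simp at h
  | cons q L ih =>
    intro dz hz hu hnd
    simp only [List.map_cons, List.nodup_cons] at hnd
    by_cases hq : q.1 = z
    · have hqz : q = (z, dz) := by
        rcases List.mem_cons.1 hz with h | h
        · exact h.symm
        · exact absurd (hq ▸ mem_map_fst h : q.1 ∈ _) hnd.1
      subst hqz
      simp only [List.map_cons, List.sum_cons, Equiv.swap_apply_right]
      rw [sum_swap_aux0 w u z L]
      · ring
      · intro p hp
        refine ⟨hu p (List.mem_cons_of_mem _ hp), fun hpz => hnd.1 ?_⟩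
        rw [← hpz]; simpa using mem_map_fst hp
    · have hqu : q.1 ≠ u := hu q List.mem_cons_self
      have hz' : (z, dz) ∈ L := by
        rcases List.mem_cons.1 hz with h | h
        · exact absurd (by rw [← h]) hq
        · exact h
      simp only [List.map_cons, List.sum_cons, Equiv.swap_apply_of_ne_of_ne hqu hq,
        ih dz hz' (fun p hp => hu p (List.mem_cons_of_mem _ hp)) hnd.2]
      ring

theorem sum_swap (hne : u ≠ z) : ∀ (L : List (α × ℕ)) (du dz : ℕ),
    (u, du) ∈ L → (z, dz) ∈ L → (L.map Prod.fst).Nodup →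
    (L.map fun q => w (Equiv.swap u z q.1) * (q.2 : ℝ)).sum
      = (L.map fun q => w q.1 * (q.2 : ℝ)).sum + (w z - w u) * du + (w u - w z) * dz := by
  intro L
  induction L with
  | nil => intro du dz h; simp at h
  | cons q L ih =>
    intro du dz hu hz hnd
    simp only [List.map_cons, List.nodup_cons] at hnd
    by_cases hqu : q.1 = u
    · have hq : q = (u, du) := by
        rcases List.mem_cons.1 hu with h | h
        · exact h.symm
        · exact absurd (hqu ▸ mem_map_fst h : q.1 ∈ _) hnd.1
      subst hq
      have hz' : (z, dz) ∈ L := by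
        rcases List.mem_cons.1 hz with h | h
        · exact absurd (congrArg Prod.fst h).symm hne
        · exact h
      have hLu : ∀ p ∈ L, p.1 ≠ u := fun p hp hpu => hnd.1 (by rw [← hpu]; simpa using mem_map_fst hp)
      simp only [List.map_cons, List.sum_cons, Equiv.swap_apply_left,
        sum_swap_aux1 w u z hne L dz hz' hLu hnd.2]
      ring
    · by_cases hqz : q.1 = z
      · have hq : q = (z, dz) := by
          rcases List.mem_cons.1 hz with h | h
          · exact h.symm
          · exact absurd (hqz ▸ mem_map_fst h : q.1 ∈ _) hnd.1
        subst hq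
        have hu' : (u, du) ∈ L := by
          rcases List.mem_cons.1 hu with h | h
          · exact absurd (congrArg Prod.fst h) hne
          · exact h
        have hLz : ∀ p ∈ L, p.1 ≠ z := fun p hp hpz => hnd.1 (by rw [← hpz]; simpa using mem_map_fst hp)
        have hswap : ∀ c : α, Equiv.swap u z c = Equiv.swap z u c := by
          intro c; rw [Equiv.swap_comm]
        simp only [List.map_cons, List.sum_cons, hswap, Equiv.swap_apply_right, Equiv.swap_apply_left,
          sum_swap_aux1 w z u hne.symm L du hu' hLz hnd.2]
        ring
      · have hu' : (u, du) ∈ L := by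
          rcases List.mem_cons.1 hu with h | h
          · exact absurd (by rw [← h]) hqu
          · exact h
        have hz' : (z, dz) ∈ L := by
          rcases List.mem_cons.1 hz with h | h
          · exact absurd (by rw [← h]) hqz
          · exact h
        simp only [List.map_cons, List.sum_cons, Equiv.swap_apply_of_ne_of_ne hqu hqz,
          ih du dz hu' hz' hnd.2]
        ring

theorem cost_bmap_swap {t : BTree α} (hnd : t.leafLabels.Nodup) {du dz : ℕ}
    (hu : (u, du) ∈ t.leavesD 0) (hz : (z, dz) ∈ t.leavesD 0) (hne : u ≠ z) :
    cost w (bmap (Equiv.swap u z) t)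
      = cost w t + (w z - w u) * du + (w u - w z) * dz := by
  rw [cost_bmap]
  exact sum_swap w u z hne _ du dz hu hz hnd

theorem cost_bmap_swap_le {t : BTree α} (hnd : t.leafLabels.Nodup) {du dz : ℕ}
    (hu : (u, du) ∈ t.leavesD 0) (hz : (z, dz) ∈ t.leavesD 0) (hne : u ≠ z)
    (hw : w u ≤ w z) (hd : du ≤ dz) :
    cost w (bmap (Equiv.swap u z) t) ≤ cost w t := by
  rw [cost_bmap_swap w u z hnd hu hz hne]
  have hd' : (du : ℝ) ≤ dz := Nat.cast_le.2 hd
  nlinarith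

end Swap

theorem multiset_map_swap {u z : α} {M : Multiset α} (hu : u ∈ M) (hz : z ∈ M)
    (hnd : M.Nodup) : M.map (Equiv.swap u z) = M := by
  by_cases h : u = z
  · subst h
    rw [Equiv.swap_self]
    simp
  · obtain ⟨M₁, rfl⟩ := Multiset.exists_cons_of_mem hu
    have hz1 : z ∈ M₁ := by
      rcases Multiset.mem_cons.1 hz with h' | h'
      · exact absurd h'.symm h
      · exact h'
    obtain ⟨M₂, rfl⟩ := Multiset.exists_cons_of_mem hz1
    rw [Multiset.nodup_cons, Multiset.nodup_cons] at hnd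
    have hM2 : M₂.map (Equiv.swap u z) = M₂ := by
      have : M₂.map (Equiv.swap u z) = M₂.map id := by
        refine Multiset.map_congr rfl (fun c hc => ?_)
        refine Equiv.swap_apply_of_ne_of_ne (fun hcu => ?_) (fun hcz => hnd.2.1 (hcz ▸ hc))
        exact hnd.1 (Multiset.mem_cons.2 (Or.inr (hcu ▸ hc)))
      simpa using this
    simp only [Multiset.map_cons, Equiv.swap_apply_left, Equiv.swap_apply_right, hM2]
    rw [Multiset.cons_swap]

theorem leafLabels_bmap_swap {u z : α} {t : BTree α} (hnd : t.leafLabels.Nodup)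
    (hu : u ∈ t.leafLabels) (hz : z ∈ t.leafLabels) :
    ((bmap (Equiv.swap u z) t).leafLabels : Multiset α) = (t.leafLabels : Multiset α) := by
  rw [leafLabels_bmap]
  rw [show ((t.leafLabels.map (Equiv.swap u z) : List α) : Multiset α)
      = (t.leafLabels : Multiset α).map (Equiv.swap u z) from rfl]
  exact multiset_map_swap (Multiset.mem_coe.2 hu) (Multiset.mem_coe.2 hz)
    (Multiset.coe_nodup.2 hnd)

theorem depth_le_height0 {t : BTree α} {x : α} {d : ℕ} (h : (x, d) ∈ t.leavesD 0) :
    d ≤ t.height := by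
  have := depth_le_height h; omega

theorem label_mem {t : BTree α} {x : α} {d : ℕ} (h : (x, d) ∈ t.leavesD 0) :
    x ∈ t.leafLabels := mem_map_fst h

theorem exists_deepest : ∀ (t : BTree α), (∀ a, t ≠ leaf a) →
    ∃ x y, Sub (node (leaf x) (leaf y)) t ∧
      (x, t.height) ∈ t.leavesD 0 ∧ (y, t.height) ∈ t.leavesD 0 := by
  intro t
  induction t with
  | leaf a => intro h; exact absurd rfl (h a)
  | node l r ihl ihr =>
    intro _
    by_cases hlr : r.height ≤ l.height
    · cases l with
      | leaf a =>
        cases r with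
        | leaf b =>
          refine ⟨a, b, Sub.refl, ?_, ?_⟩ <;> simp [leavesD, height]
        | node r1 r2 => simp [height] at hlr
      | node l1 l2 =>
        obtain ⟨x, y, hs, hx, hy⟩ := ihl (by intro a h; cases h)
        have hh : (node (node l1 l2) r).height = (node l1 l2).height + 1 := by
          show max _ _ + 1 = _
          rw [Nat.max_eq_left hlr]
        refine ⟨x, y, Sub.left hs, ?_, ?_⟩
        · rw [hh]
          exact List.mem_append_left _ (mem_leavesD_shift hx 1)
        · rw [hh]
          exact List.mem_append_left _ (mem_leavesD_shift hy 1)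
    · cases r with
      | leaf b => simp [height] at hlr
      | node r1 r2 =>
        obtain ⟨x, y, hs, hx, hy⟩ := ihr (by intro a h; cases h)
        have hh : (node l (node r1 r2)).height = (node r1 r2).height + 1 := by
          show max _ _ + 1 = _
          rw [Nat.max_eq_right (Nat.le_of_lt (Nat.lt_of_not_le hlr))]
        refine ⟨x, y, Sub.right hs, ?_, ?_⟩
        · rw [hh]
          exact List.mem_append_right _ (mem_leavesD_shift hx 1)
        · rw [hh]
          exact List.mem_append_right _ (mem_leavesD_shift hy 1)

theorem leafLabels_pair (u v : α) :
    (node (leaf u) (leaf v)).leafLabels = [u, v] := by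
  simp [leafLabels_node, leafLabels, leavesD]

theorem cost_node (w : α → ℝ) (t₁ t₂ : BTree α) :
    cost w (node t₁ t₂)
      = cost w t₁ + cost w t₂ + treeWeight w t₁ + treeWeight w t₂ := by
  rw [cost_eq_costD, costD_node, costD_eq, costD_eq]
  push_cast
  rw [cost_eq_costD, cost_eq_costD]
  ring

theorem sum_map_eq_of_coe_eq {L₁ L₂ : List α} (h : (L₁ : Multiset α) = (L₂ : Multiset α))
    (f : α → ℝ) : (L₁.map f).sum = (L₂.map f).sum := by
  have := congrArg (fun M : Multiset α => (M.map f).sum) h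
  simpa using this

theorem flip (w : α → ℝ) {u v : α} {t : BTree α} (h : Sub (node (leaf u) (leaf v)) t) :
    ∃ t', (t'.leafLabels : Multiset α) = (t.leafLabels : Multiset α) ∧
      cost w t' = cost w t ∧ Sub (node (leaf v) (leaf u)) t' := by
  obtain ⟨t', hr⟩ := h.exists_repl (node (leaf v) (leaf u))
  have hlab := hr.labels
  rw [leafLabels_pair, leafLabels_pair] at hlab
  have hvu : ((([v, u] : List α)) : Multiset α) = (([u, v] : List α) : Multiset α) := by
    change v ::ₘ u ::ₘ 0 = u ::ₘ v ::ₘ 0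
    rw [Multiset.cons_swap]
  rw [hvu] at hlab
  have hlab' : (t.leafLabels : Multiset α) = (t'.leafLabels : Multiset α) :=
    add_right_cancel hlab
  obtain ⟨k, hk⟩ := hr.cost w 0
  simp only [costD_node, costD_leaf] at hk
  rw [← cost_eq_costD, ← cost_eq_costD] at hk
  refine ⟨t', hlab'.symm, ?_, hr.sub⟩
  linarith

theorem merge_step (w : α → ℝ) {t₁ t₂ : BTree α} {G : BTree (BTree α)}
    (h : Sub (node (leaf t₁) (leaf t₂)) G) :
    ∃ G' : BTree (BTree α),
      (G'.leafLabels : Multiset (BTree α)) + (([t₁, t₂] : List (BTree α)) : Multiset (BTree α))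
        = (G.leafLabels : Multiset (BTree α)) + (([node t₁ t₂] : List (BTree α)) : Multiset (BTree α)) ∧
      cost w (graft G') = cost w (graft G) := by
  obtain ⟨G', hr⟩ := h.exists_repl (leaf (node t₁ t₂))
  have hlab := hr.labels
  rw [leafLabels_pair] at hlab
  rw [show (leaf (node t₁ t₂) : BTree (BTree α)).leafLabels = [node t₁ t₂] from rfl] at hlab
  refine ⟨G', hlab.symm, ?_⟩
  obtain ⟨k, hk⟩ := hr.cost (treeWeight w) 0
  simp only [costD_node, costD_leaf] at hk
  rw [← cost_eq_costD, ← cost_eq_costD] at hk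
  have hWnode : treeWeight w (node t₁ t₂) = treeWeight w t₁ + treeWeight w t₂ := rfl
  rw [hWnode] at hk
  push_cast at hk
  have hsum : (G.leafLabels.map (cost w)).sum + cost w (node t₁ t₂)
      = (G'.leafLabels.map (cost w)).sum + (cost w t₁ + cost w t₂) := by
    have := congrArg (fun M : Multiset (BTree α) => ((M.map (cost w)).sum)) hlab
    simpa using this
  have hcn := cost_node w t₁ t₂
  have hg := costD_graft w G 0
  have hg' := costD_graft w G' 0
  rw [← cost_eq_costD, ← cost_eq_costD] at hg hg'
  rw [hg, hg']
  linarith [hk, hsum, hcn]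

theorem swap_pack (w : α → ℝ) {t : BTree α} (hnd : t.leafLabels.Nodup) {p q : α} {dp dq : ℕ}
    (hp : (p, dp) ∈ t.leavesD 0) (hq : (q, dq) ∈ t.leavesD 0) (hne : p ≠ q)
    (hw : w p ≤ w q) (hd : dp ≤ dq) :
    ((bmap (Equiv.swap p q) t).leafLabels : Multiset α) = (t.leafLabels : Multiset α) ∧
    (bmap (Equiv.swap p q) t).leafLabels.Nodup ∧
    cost w (bmap (Equiv.swap p q) t) ≤ cost w t :=
  ⟨leafLabels_bmap_swap hnd (label_mem hp) (label_mem hq),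
   by rw [leafLabels_bmap]; exact hnd.map (Equiv.injective _),
   cost_bmap_swap_le w p q hnd hp hq hne hw hd⟩

theorem mem_leavesD_bmap {t : BTree α} {c : α} {d : ℕ} (f : α → α)
    (h : (c, d) ∈ t.leavesD 0) : (f c, d) ∈ (bmap f t).leavesD 0 := by
  rw [leavesD_bmap]
  exact List.mem_map_of_mem h

theorem bmap_pair (f : α → α) (u v : α) :
    bmap f (node (leaf u) (leaf v)) = node (leaf (f u)) (leaf (f v)) := rfl

theorem exchange (w : α → ℝ) {a b : α} (hab : a ≠ b) (t : BTree α)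
    (hnd : t.leafLabels.Nodup) (ha : a ∈ t.leafLabels) (hb : b ∈ t.leafLabels)
    (hmin : ∀ c ∈ t.leafLabels, c ≠ a → c ≠ b → w a ≤ w c ∧ w b ≤ w c)
    (hleaf : ∀ u, t ≠ leaf u) :
    ∃ t', (t'.leafLabels : Multiset α) = (t.leafLabels : Multiset α) ∧
      cost w t' ≤ cost w t ∧ Sub (node (leaf a) (leaf b)) t' := by
  obtain ⟨x, y, hsub, hx, hy⟩ := exists_deepest t hleaf
  have hxy : x ≠ y := by
    have hsl := hsub.labels_sublist
    rw [leafLabels_pair] at hsl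
    have hnd2 : ([x, y] : List α).Nodup := hsl.nodup hnd
    simpa using hnd2
  obtain ⟨qa, hqa, hqa1⟩ := List.mem_map.1 ha
  obtain ⟨a1, da⟩ := qa
  cases hqa1
  obtain ⟨qb, hqb, hqb1⟩ := List.mem_map.1 hb
  obtain ⟨b1, db⟩ := qb
  cases hqb1
  have hab' : a1 ≠ b1 := hab
  have hda' : da ≤ t.height := depth_le_height0 hqa
  have hdb' : db ≤ t.height := depth_le_height0 hqb
  have hxl : x ∈ t.leafLabels := label_mem hx
  have hyl : y ∈ t.leafLabels := label_mem hy
  by_cases hax : a1 = x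
  · subst hax
    by_cases hyb : y = b1
    · subst hyb
      exact ⟨t, rfl, le_refl _, hsub⟩
    · have hya : y ≠ a1 := fun h => hxy h.symm
      have hwby : w b1 ≤ w y := (hmin y hyl hya hyb).2
      obtain ⟨hl1, hn1, hc1⟩ := swap_pack w hnd hqb hy (fun h => hyb h.symm) hwby hdb'
      refine ⟨bmap (Equiv.swap b1 y) t, hl1, hc1, ?_⟩
      have hs1 := hsub.bmap (Equiv.swap b1 y)
      rw [bmap_pair] at hs1
      rw [Equiv.swap_apply_of_ne_of_ne hab' (Ne.symm hya), Equiv.swap_apply_right] at hs1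
      exact hs1
  · by_cases hay : a1 = y
    · subst hay
      by_cases hxb : x = b1
      · subst hxb
        obtain ⟨t', hl', hc', hs'⟩ := flip w hsub
        exact ⟨t', hl', le_of_eq hc', hs'⟩
      · have hxa : x ≠ a1 := fun h => hax h.symm
        have hwbx : w b1 ≤ w x := (hmin x hxl hxa hxb).2
        obtain ⟨hl1, hn1, hc1⟩ := swap_pack w hnd hqb hx (fun h => hxb h.symm) hwbx hdb'
        have hs1 := hsub.bmap (Equiv.swap b1 x)
        rw [bmap_pair] at hs1
        rw [show Equiv.swap b1 x x = b1 from Equiv.swap_apply_right _ _] at hs1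
        rw [show Equiv.swap b1 x a1 = a1 from
          Equiv.swap_apply_of_ne_of_ne hab' (Ne.symm hxa)] at hs1
        obtain ⟨t', hl', hc', hs'⟩ := flip w hs1
        exact ⟨t', hl'.trans hl1, le_trans (le_of_eq hc') hc1, hs'⟩
    · by_cases hbx : b1 = x
      · subst hbx
        have hya : y ≠ a1 := fun h => hay h.symm
        have hyb : y ≠ b1 := fun h => hxy h.symm
        have hway : w a1 ≤ w y := (hmin y hyl hya hyb).1
        obtain ⟨hl1, hn1, hc1⟩ := swap_pack w hnd hqa hy hay hway hda'
        have hs1 := hsub.bmap (Equiv.swap a1 y)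
        rw [bmap_pair] at hs1
        rw [show Equiv.swap a1 y b1 = b1 from
          Equiv.swap_apply_of_ne_of_ne (Ne.symm hab') hyb.symm] at hs1
        rw [show Equiv.swap a1 y y = a1 from Equiv.swap_apply_right _ _] at hs1
        obtain ⟨t', hl', hc', hs'⟩ := flip w hs1
        exact ⟨t', hl'.trans hl1, le_trans (le_of_eq hc') hc1, hs'⟩
      · by_cases hby : b1 = y
        · subst hby
          have hxa : x ≠ a1 := fun h => hax h.symm
          have hxb : x ≠ b1 := hxy
          have hwax : w a1 ≤ w x := (hmin x hxl hxa hxb).1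
          obtain ⟨hl1, hn1, hc1⟩ := swap_pack w hnd hqa hx hax hwax hda'
          have hs1 := hsub.bmap (Equiv.swap a1 x)
          rw [bmap_pair] at hs1
          rw [show Equiv.swap a1 x x = a1 from Equiv.swap_apply_right _ _] at hs1
          rw [show Equiv.swap a1 x b1 = b1 from
            Equiv.swap_apply_of_ne_of_ne (Ne.symm hab') (fun h => hbx h)] at hs1
          exact ⟨bmap (Equiv.swap a1 x) t, hl1, hc1, hs1⟩
        · have hxa : x ≠ a1 := fun h => hax h.symm
          have hya : y ≠ a1 := fun h => hay h.symm
          have hyb : y ≠ b1 := fun h => hby h.symm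
          have hxb : x ≠ b1 := fun h => hbx h.symm
          have hwax : w a1 ≤ w x := (hmin x hxl hxa hxb).1
          have hwby : w b1 ≤ w y := (hmin y hyl hya hyb).2
          obtain ⟨hl1, hn1, hc1⟩ := swap_pack w hnd hqa hx hax hwax hda'
          have hbmem : (b1, db) ∈ (bmap (Equiv.swap a1 x) t).leavesD 0 := by
            have hm := mem_leavesD_bmap (Equiv.swap a1 x) hqb
            rwa [show Equiv.swap a1 x b1 = b1 from
              Equiv.swap_apply_of_ne_of_ne (Ne.symm hab') hxb.symm] at hm
          have hymem : (y, t.height) ∈ (bmap (Equiv.swap a1 x) t).leavesD 0 := by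
            have hm := mem_leavesD_bmap (Equiv.swap a1 x) hy
            rwa [show Equiv.swap a1 x y = y from
              Equiv.swap_apply_of_ne_of_ne hya hxy.symm] at hm
          obtain ⟨hl2, hn2, hc2⟩ := swap_pack w hn1 hbmem hymem hby hwby hdb'
          have hs1 := hsub.bmap (Equiv.swap a1 x)
          rw [bmap_pair] at hs1
          rw [show Equiv.swap a1 x x = a1 from Equiv.swap_apply_right _ _] at hs1
          rw [show Equiv.swap a1 x y = y from
            Equiv.swap_apply_of_ne_of_ne hya hxy.symm] at hs1
          have hs2 := hs1.bmap (Equiv.swap b1 y)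
          rw [bmap_pair] at hs2
          rw [show Equiv.swap b1 y a1 = a1 from
            Equiv.swap_apply_of_ne_of_ne hab' (fun h => hay h)] at hs2
          rw [show Equiv.swap b1 y y = b1 from Equiv.swap_apply_right _ _] at hs2
          exact ⟨bmap (Equiv.swap b1 y) (bmap (Equiv.swap a1 x) t),
            hl2.trans hl1, le_trans hc2 hc1, hs2⟩

end BTree

namespace BTree
variable {α β : Type}

attribute [local instance] Classical.decEq

theorem nodup_of_bind_nodup {F : Multiset (BTree α)}
    (h : (F.bind fun u => (u.leafLabels : Multiset α)).Nodup) : F.Nodup := by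
  induction F using Multiset.induction with
  | empty => simp
  | cons u F ih =>
    rw [Multiset.cons_bind, Multiset.nodup_add] at h
    rw [Multiset.nodup_cons]
    refine ⟨fun hu => ?_, ih h.2.1⟩
    obtain ⟨i, hi⟩ := List.exists_mem_of_ne_nil _ (leafLabels_ne_nil u)
    exact Multiset.disjoint_left.1 h.2.2 (Multiset.mem_coe.2 hi)
      (Multiset.mem_bind.2 ⟨u, hu, Multiset.mem_coe.2 hi⟩)

theorem eq_leaf_of_labels_singleton {G : BTree α} {u : α}
    (h : (G.leafLabels : Multiset α) = {u}) : G = leaf u := by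
  cases G with
  | leaf a =>
    have : a = u := by
      have : ((([a] : List α)) : Multiset α) = {u} := h
      simpa using this
    rw [this]
  | node l r =>
    exfalso
    have hc := congrArg Multiset.card h
    rw [leafLabels_node] at hc
    simp only [Multiset.coe_card, List.length_append, Multiset.card_singleton] at hc
    have h1 := List.length_pos_iff.2 (leafLabels_ne_nil l)
    have h2 := List.length_pos_iff.2 (leafLabels_ne_nil r)
    omega

theorem huff_main (w : α → ℝ) (t : BTree α) (F : Multiset (BTree α))
    (hrun : Relation.ReflTransGen (HuffStep w) F {t}) :
    (F.bind fun u => (u.leafLabels : Multiset α)).Nodup →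
    ∀ G : BTree (BTree α), (G.leafLabels : Multiset (BTree α)) = F →
      cost w t ≤ cost w (graft G) := by
  induction hrun using Relation.ReflTransGen.head_induction_on with
  | refl =>
    intro _ G hG
    rw [eq_leaf_of_labels_singleton hG]
    exact le_refl _
  | head hstep hrest ih =>
    cases hstep with
    | step t₁ t₂ F₀ h₁ h₂ =>
      intro hInv G hG
      have hndF : (t₁ ::ₘ t₂ ::ₘ F₀).Nodup := nodup_of_bind_nodup hInv
      have hndG : G.leafLabels.Nodup := by
        rw [← Multiset.coe_nodup, hG]; exact hndF
      have htne : t₁ ≠ t₂ := by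
        intro he
        rw [Multiset.nodup_cons] at hndF
        exact hndF.1 (he ▸ Multiset.mem_cons_self t₂ F₀)
      have hmem1 : t₁ ∈ G.leafLabels := by
        rw [← Multiset.mem_coe, hG]; exact Multiset.mem_cons_self _ _
      have hmem2 : t₂ ∈ G.leafLabels := by
        rw [← Multiset.mem_coe, hG]
        exact Multiset.mem_cons_of_mem (Multiset.mem_cons_self _ _)
      have hmin : ∀ c ∈ G.leafLabels, c ≠ t₁ → c ≠ t₂ →
          treeWeight w t₁ ≤ treeWeight w c ∧ treeWeight w t₂ ≤ treeWeight w c := by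
        intro c hc hc1 hc2
        have : c ∈ t₁ ::ₘ t₂ ::ₘ F₀ := by rw [← hG]; exact Multiset.mem_coe.2 hc
        rcases Multiset.mem_cons.1 this with h | h
        · exact absurd h hc1
        rcases Multiset.mem_cons.1 h with h' | h'
        · exact absurd h' hc2
        · exact ⟨h₁ c h', h₂ c h'⟩
      have hGleaf : ∀ u, G ≠ leaf u := by
        intro u he
        have hc := congrArg Multiset.card hG
        rw [he] at hc
        simp [leafLabels, leavesD] at hc
      obtain ⟨G₂, hlab₂, hcost₂, hsub₂⟩ :=
        exchange (treeWeight w) htne G hndG hmem1 hmem2 hmin hGleaf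
      obtain ⟨G', hlab', hcost'⟩ := merge_step w hsub₂
      have hlabG' : (G'.leafLabels : Multiset (BTree α)) = node t₁ t₂ ::ₘ F₀ := by
        have key : (G'.leafLabels : Multiset (BTree α)) + (t₁ ::ₘ t₂ ::ₘ 0)
            = (node t₁ t₂ ::ₘ F₀) + (t₁ ::ₘ t₂ ::ₘ 0) := by
          rw [show ((([t₁, t₂] : List (BTree α))) : Multiset (BTree α)) = t₁ ::ₘ t₂ ::ₘ 0 from rfl] at hlab'
          rw [hlab', hlab₂, hG,
            show ((([node t₁ t₂] : List (BTree α))) : Multiset (BTree α)) = node t₁ t₂ ::ₘ 0 from rfl]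
          refine Multiset.ext.2 fun c => ?_
          simp only [Multiset.count_add, Multiset.count_cons, Multiset.count_zero]
          omega
        exact add_right_cancel key
      have hInv' : (((node t₁ t₂ ::ₘ F₀) : Multiset (BTree α)).bind
          fun u => (u.leafLabels : Multiset α)).Nodup := by
        have heq : ((node t₁ t₂ ::ₘ F₀ : Multiset (BTree α)).bind fun u => (u.leafLabels : Multiset α))
            = ((t₁ ::ₘ t₂ ::ₘ F₀ : Multiset (BTree α)).bind fun u => (u.leafLabels : Multiset α)) := by
          rw [Multiset.cons_bind, Multiset.cons_bind, Multiset.cons_bind, leafLabels_node]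
          rw [show ((leafLabels t₁ ++ leafLabels t₂ : List α) : Multiset α)
            = (leafLabels t₁ : Multiset α) + (leafLabels t₂ : Multiset α) from rfl, add_assoc]
        rw [heq]; exact hInv
      have hIH := ih hInv' G' hlabG'
      have hcg₂ : cost w (graft G₂) ≤ cost w (graft G) := by
        have hg := costD_graft w G 0
        have hg₂ := costD_graft w G₂ 0
        rw [← cost_eq_costD, ← cost_eq_costD] at hg hg₂
        rw [hg, hg₂, sum_map_eq_of_coe_eq hlab₂ (cost w)]
        linarith [hcost₂]
      calc cost w t ≤ cost w (graft G') := hIH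
        _ = cost w (graft G₂) := hcost'
        _ ≤ cost w (graft G) := hcg₂

theorem bind_labels_map_leaf (L : List α) :
    (((L.map leaf : List (BTree α)) : Multiset (BTree α)).bind
      fun u => (u.leafLabels : Multiset α)) = (L : Multiset α) := by
  induction L with
  | nil => simp
  | cons a L ih =>
    rw [show (((a :: L).map leaf : List (BTree α)) : Multiset (BTree α))
      = leaf a ::ₘ ((L.map leaf : List (BTree α)) : Multiset (BTree α)) from rfl]
    rw [Multiset.cons_bind, ih]
    rw [show ((leaf a : BTree α).leafLabels : Multiset α) = {a} from rfl]
    rw [Multiset.singleton_add]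
    rfl

end BTree

/-- Huffman's algorithm produces a binary prefix tree of minimum weighted
expected leaf depth: starting from the `n` singleton leaves with weights
`wᵢ > 0` and repeatedly merging the two smallest-weight subtrees, the resulting
tree minimizes `∑ᵢ wᵢ dᵢ` over all full binary trees with these symbols at the
leaves. -/
theorem huffman_optimal (n : ℕ) (w : Fin n → ℝ) (hw : ∀ i, 0 < w i)
    (t : BTree (Fin n))
    (hrun : Relation.ReflTransGen (HuffStep w)
      (((List.finRange n).map BTree.leaf : List (BTree (Fin n))) : Multiset (BTree (Fin n)))
      ({t} : Multiset (BTree (Fin n)))) :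
    ∀ t' : BTree (Fin n), t'.leafLabels.Perm (List.finRange n) →
      BTree.cost w t ≤ BTree.cost w t' := by
  intro t' hperm
  have hG : (((BTree.bmap BTree.leaf t').leafLabels : List (BTree (Fin n))) : Multiset (BTree (Fin n)))
      = (((List.finRange n).map BTree.leaf : List (BTree (Fin n))) : Multiset (BTree (Fin n))) := by
    rw [BTree.leafLabels_bmap]
    exact Multiset.coe_eq_coe.2 (hperm.map _)
  have hInv := BTree.bind_labels_map_leaf (α := Fin n) (List.finRange n)
  have := BTree.huff_main w t _ hrun
    (by rw [hInv]; exact Multiset.coe_nodup.2 (List.nodup_finRange n))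
    (BTree.bmap BTree.leaf t') hG
  rwa [BTree.graft_bmap_leaf] at this
end

section
/- Splay tree static optimality (access lemma consequence): for any sequence of m accesses to items 1,…,n where item i is accessed qᵢ ≥ 1 times, the total splay tree access cost is O(m + ∑ᵢ qᵢ log(m/qᵢ)), and in particular the amortized cost per access is O(log n). -/
/-- Binary search trees with natural-number keys. -/
inductive BST : Type where
  | nil : BST
  | node : BST → ℕ → BST → BST

namespace BST

/-- In-order list of keys. -/
def keys : BST → List ℕ
  | nil => []
  | node l a r => keys l ++ [a] ++ keys r

/-- The binary search tree property. -/
def IsBST : BST → Prop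
  | nil => True
  | node l a r => (∀ k ∈ keys l, k < a) ∧ (∀ k ∈ keys r, a < k) ∧ IsBST l ∧ IsBST r

/-- Splaying key `x` to the root via zig, zig-zig and zig-zag rotations
(functional, Nipkow-style definition). -/
def splay (x : ℕ) : BST → BST
  | nil => nil
  | node l a r =>
    if x = a then node l a r
    else if x < a then
      match l with
      | nil => node l a r
      | node ll b lr =>
        if x = b then node ll b (node lr a r)
        else if x < b then
          match splay x ll with
          | nil => node ll b (node lr a r)
          | node t₁ c t₂ => node t₁ c (node t₂ b (node lr a r))
        else
          match splay x lr with
          | nil => node ll b (node lr a r)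
          | node t₁ c t₂ => node (node ll b t₁) c (node t₂ a r)
    else
      match r with
      | nil => node l a r
      | node rl b rr =>
        if x = b then node (node l a rl) b rr
        else if x < b then
          match splay x rl with
          | nil => node (node l a rl) b rr
          | node t₁ c t₂ => node (node l a t₁) c (node t₂ b rr)
        else
          match splay x rr with
          | nil => node (node l a rl) b rr
          | node t₁ c t₂ => node (node (node l a rl) b t₁) c t₂

/-- The cost of an access: the number of nodes on the search path for `x`
(the depth of the accessed node plus one). -/
def pathLen (x : ℕ) : BST → ℕ
  | nil => 0
  | node l a r =>
    if x = a then 1 else if x < a then 1 + pathLen x l else 1 + pathLen x r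

/-- Total cost of processing an access sequence, splaying after each access. -/
def totalCost : BST → List ℕ → ℕ
  | _, [] => 0
  | t, x :: xs => pathLen x t + totalCost (splay x t) xs

end BST

set_option linter.dupNamespace false
set_option maxHeartbeats 1000000

namespace BST

theorem splay_node (x a : ℕ) (l r : BST) : splay x (node l a r) =
    if x = a then node l a r
    else if x < a then
      match l with
      | nil => node l a r
      | node ll b lr =>
        if x = b then node ll b (node lr a r)
        else if x < b then
          match splay x ll with
          | nil => node ll b (node lr a r)
          | node t₁ c t₂ => node t₁ c (node t₂ b (node lr a r))
        else
          match splay x lr with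
          | nil => node ll b (node lr a r)
          | node t₁ c t₂ => node (node ll b t₁) c (node t₂ a r)
    else
      match r with
      | nil => node l a r
      | node rl b rr =>
        if x = b then node (node l a rl) b rr
        else if x < b then
          match splay x rl with
          | nil => node (node l a rl) b rr
          | node t₁ c t₂ => node (node l a t₁) c (node t₂ b rr)
        else
          match splay x rr with
          | nil => node (node l a rl) b rr
          | node t₁ c t₂ => node (node (node l a rl) b t₁) c t₂ := by
  cases l <;> cases r <;> rfl

theorem keys_splay (x : ℕ) (t : BST) : keys (splay x t) = keys t := by
  induction t using splay.induct x with
  | case1 => rfl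
  | case2 l r => simp [splay_node, keys]
  | case3 a r h1 h2 => simp [splay_node, keys, h1, h2]
  | case4 a r h1 h2 ll lr => simp [splay_node, keys, h1, h2]
  | case5 a r h1 h2 ll b lr h3 h4 heq ih =>
      simp [splay_node, keys, h1, h2, h3, h4, heq]
  | case6 a r h1 h2 ll b lr h3 h4 t1 c t2 heq ih =>
      rw [heq] at ih
      simp [splay_node, keys, h1, h2, h3, h4, heq, ← ih]
  | case7 a r h1 h2 ll b lr h3 h4 heq ih =>
      simp [splay_node, keys, h1, h2, h3, h4, heq]
  | case8 a r h1 h2 ll b lr h3 h4 t1 c t2 heq ih =>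
      rw [heq] at ih
      simp [splay_node, keys, h1, h2, h3, h4, heq, ← ih]
  | case9 l a h1 h2 => simp [splay_node, keys, h1, h2]
  | case10 l a h1 h2 rl rr => simp [splay_node, keys, h1, h2]
  | case11 l a h1 h2 rl b rr h3 h4 heq ih =>
      simp [splay_node, keys, h1, h2, h3, h4, heq]
  | case12 l a h1 h2 rl b rr h3 h4 t1 c t2 heq ih =>
      rw [heq] at ih
      simp [splay_node, keys, h1, h2, h3, h4, heq, ← ih]
  | case13 l a h1 h2 rl b rr h3 h4 heq ih =>
      simp [splay_node, keys, h1, h2, h3, h4, heq]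
  | case14 l a h1 h2 rl b rr h3 h4 t1 c t2 heq ih =>
      rw [heq] at ih
      simp [splay_node, keys, h1, h2, h3, h4, heq, ← ih]

theorem keys_eq_nil {t : BST} (h : keys t = []) : t = nil := by
  cases t with
  | nil => rfl
  | node l a r => simp [keys] at h

theorem sorted_keys : ∀ {t : BST}, IsBST t → (keys t).Pairwise (· < ·) := by
  intro t
  induction t with
  | nil => intro _; simp [keys]
  | node l a r ihl ihr =>
      intro ⟨h1, h2, h3, h4⟩
      simp only [keys, List.append_assoc, List.singleton_append]
      rw [List.pairwise_append]
      refine ⟨ihl h3, ?_, ?_⟩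
      · rw [List.pairwise_cons]
        exact ⟨h2, ihr h4⟩
      · intro x hx y hy
        rcases List.mem_cons.mp hy with rfl | hy
        · exact h1 x hx
        · exact (h1 x hx).trans (h2 y hy)

theorem isBST_of_sorted : ∀ {t : BST}, (keys t).Pairwise (· < ·) → IsBST t := by
  intro t
  induction t with
  | nil => intro _; trivial
  | node l a r ihl ihr =>
      intro h
      simp only [keys, List.append_assoc, List.singleton_append] at h
      rw [List.pairwise_append] at h
      obtain ⟨hl, hr, hcross⟩ := h
      rw [List.pairwise_cons] at hr
      exact ⟨fun k hk => hcross k hk a (by simp), hr.1, ihl hl, ihr hr.2⟩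

theorem isBST_splay (x : ℕ) {t : BST} (h : IsBST t) : IsBST (splay x t) :=
  isBST_of_sorted (by rw [keys_splay]; exact sorted_keys h)

noncomputable def lg (x : ℝ) : ℝ := Real.log x / Real.log 2

noncomputable def W (w : ℕ → ℝ) : BST → ℝ
  | nil => 0
  | node l a r => W w l + w a + W w r

noncomputable def Phi (w : ℕ → ℝ) : BST → ℝ
  | nil => 0
  | node l a r => Phi w l + Phi w r + lg (W w l + w a + W w r)

theorem W_node (w : ℕ → ℝ) (l : BST) (a : ℕ) (r : BST) :
    W w (node l a r) = W w l + w a + W w r := rfl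

theorem Phi_node (w : ℕ → ℝ) (l : BST) (a : ℕ) (r : BST) :
    Phi w (node l a r) = Phi w l + Phi w r + lg (W w l + w a + W w r) := rfl

theorem W_eq_sum (w : ℕ → ℝ) : ∀ t : BST, W w t = ((keys t).map w).sum := by
  intro t
  induction t with
  | nil => simp [W, keys]
  | node l a r ihl ihr => simp [W_node, keys, ihl, ihr]; ring

theorem W_splay (w : ℕ → ℝ) (x : ℕ) (t : BST) : W w (splay x t) = W w t := by
  rw [W_eq_sum, W_eq_sum, keys_splay]

theorem W_nonneg {w : ℕ → ℝ} (hw : ∀ k, 0 < w k) : ∀ t : BST, 0 ≤ W w t := by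
  intro t
  induction t with
  | nil => simp [W]
  | node l a r ihl ihr => rw [W_node]; linarith [hw a]

theorem log2_pos : (0:ℝ) < Real.log 2 := Real.log_pos one_lt_two

theorem lg_mono {a b : ℝ} (h0 : 0 < a) (h : a ≤ b) : lg a ≤ lg b := by
  have := Real.log_le_log h0 h
  unfold lg
  exact div_le_div_of_nonneg_right this log2_pos.le

theorem lg_nonneg {a : ℝ} (h : 1 ≤ a) : 0 ≤ lg a :=
  div_nonneg (Real.log_nonneg h) log2_pos.le

theorem lg_amgm {a b c : ℝ} (ha : 0 < a) (hb : 0 < b) (hc : a + b ≤ c) :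
    2 + lg a + lg b ≤ 2 * lg c := by
  have hc0 : 0 < c := by linarith
  have h4 : 4 * (a * b) ≤ c ^ 2 := by nlinarith [sq_nonneg (a - b)]
  have h1 : Real.log (4 * (a * b)) ≤ Real.log (c ^ 2) :=
    Real.log_le_log (by positivity) h4
  rw [Real.log_mul (by norm_num) (by positivity),
      Real.log_mul ha.ne' hb.ne',
      show (4:ℝ) = 2 ^ 2 by norm_num, Real.log_pow, Real.log_pow] at h1
  push_cast at h1
  have h2 : (0:ℝ) < Real.log 2 := log2_pos
  have key : 2 * Real.log 2 + Real.log a + Real.log b ≤ 2 * Real.log c := by linarith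
  calc 2 + lg a + lg b
      = (2 * Real.log 2 + Real.log a + Real.log b) / Real.log 2 := by
        unfold lg; field_simp
    _ ≤ (2 * Real.log c) / Real.log 2 := by gcongr
    _ = 2 * lg c := by unfold lg; ring

end BST

namespace BST

theorem amort (w : ℕ → ℝ) (hw : ∀ k, 0 < w k) (x : ℕ) (t : BST) :
    IsBST t → x ∈ keys t →
    (pathLen x t : ℝ) + Phi w (splay x t) ≤
      Phi w t + 3 * (lg (W w t) - lg (w x)) + 2 := by
  have wnn := W_nonneg hw
  induction t using splay.induct x with
  | case1 => intro _ hx; simp [keys] at hx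
  | case2 l r =>
      intro hb hx
      simp [splay_node, pathLen, Phi_node, W_node]
      have f1 : lg (w x) ≤ lg (W w l + w x + W w r) :=
        lg_mono (hw x) (by linarith [wnn l, wnn r])
      push_cast
      linarith
  | case3 a r h1 h2 =>
      intro hb hx
      exfalso
      simp [keys] at hx
      rcases hx with rfl | hx
      · exact h1 rfl
      · exact absurd (hb.2.1 x hx) (by omega)
  | case4 a r h1 h2 ll lr =>
      -- zig: t = node (node ll x lr) a r
      intro hb hx
      simp [splay_node, h1, h2, pathLen, Phi_node, W_node]
      have f1 : lg (W w ll + w x + (W w lr + w a + W w r)) =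
          lg (W w ll + w x + W w lr + w a + W w r) := by ring_nf
      have f2 : lg (W w lr + w a + W w r) ≤ lg (W w ll + w x + W w lr + w a + W w r) :=
        lg_mono (by linarith [wnn lr, wnn r, hw a]) (by linarith [wnn ll, hw x])
      have f3 : lg (w x) ≤ lg (W w ll + w x + W w lr) :=
        lg_mono (hw x) (by linarith [wnn ll, wnn lr])
      have f4 : lg (w x) ≤ lg (W w ll + w x + W w lr + w a + W w r) :=
        lg_mono (hw x) (by linarith [wnn ll, wnn lr, wnn r, hw a])
      push_cast
      linarith
  | case5 a r h1 h2 ll b lr h3 h4 heq ih =>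
      intro hb hx
      exfalso
      obtain ⟨hla, hra, ⟨hlb, hrb, hbll, hblr⟩, hbr⟩ := hb
      have hxll : x ∈ keys ll := by
        simp [keys] at hx
        rcases hx with hx | rfl | hx | rfl | hx
        · exact hx
        · exact absurd rfl h3
        · exact absurd (hrb x hx) (by omega)
        · exact absurd rfl h1
        · exact absurd (hra x hx) (by omega)
      have := keys_splay x ll
      rw [heq] at this
      rw [← this] at hxll
      simp [keys] at hxll
  | case6 a r h1 h2 ll b lr h3 h4 t1 c t2 heq ih =>
      -- zig-zig: t = node (node ll b lr) a r, splay x ll = node t1 c t2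
      intro hb hx
      obtain ⟨hla, hra, ⟨hlb, hrb, hbll, hblr⟩, hbr⟩ := hb
      have hxll : x ∈ keys ll := by
        simp [keys] at hx
        rcases hx with hx | rfl | hx | rfl | hx
        · exact hx
        · exact absurd rfl h3
        · exact absurd (hrb x hx) (by omega)
        · exact absurd rfl h1
        · exact absurd (hra x hx) (by omega)
      have ihh := ih hbll hxll
      rw [heq, Phi_node] at ihh
      have hWll : W w t1 + w c + W w t2 = W w ll := by
        have := W_splay w x ll
        rw [heq, W_node] at this
        exact this
      rw [hWll] at ihh
      have pll : 0 < W w ll := by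
        rw [← hWll]; linarith [wnn t1, wnn t2, hw c]
      simp [splay_node, h1, h2, h3, h4, heq, pathLen, Phi_node, W_node]
      have f1 : lg (W w t1 + w c + (W w t2 + w b + (W w lr + w a + W w r))) =
          lg (W w ll + w b + W w lr + w a + W w r) := by
        rw [show W w t1 + w c + (W w t2 + w b + (W w lr + w a + W w r)) =
          W w ll + w b + W w lr + w a + W w r by linarith]
      have f2 : 2 + lg (W w ll) + lg (W w lr + w a + W w r) ≤
          2 * lg (W w ll + w b + W w lr + w a + W w r) :=
        lg_amgm pll (by linarith [wnn lr, wnn r, hw a]) (by linarith [hw b])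
      have f3 : lg (W w t2 + w b + (W w lr + w a + W w r)) ≤
          lg (W w ll + w b + W w lr + w a + W w r) :=
        lg_mono (by linarith [wnn t2, wnn lr, wnn r, hw b, hw a])
          (by linarith [wnn t1, hw c])
      have f4 : lg (W w ll) ≤ lg (W w ll + w b + W w lr) :=
        lg_mono pll (by linarith [wnn lr, hw b])
      push_cast
      linarith
  | case7 a r h1 h2 ll b lr h3 h4 heq ih =>
      intro hb hx
      exfalso
      obtain ⟨hla, hra, ⟨hlb, hrb, hbll, hblr⟩, hbr⟩ := hb
      have hxlr : x ∈ keys lr := by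
        simp [keys] at hx
        rcases hx with hx | rfl | hx | rfl | hx
        · exact absurd (hlb x hx) (by omega)
        · exact absurd rfl h3
        · exact hx
        · exact absurd rfl h1
        · exact absurd (hra x hx) (by omega)
      have := keys_splay x lr
      rw [heq] at this
      rw [← this] at hxlr
      simp [keys] at hxlr
  | case8 a r h1 h2 ll b lr h3 h4 t1 c t2 heq ih =>
      -- zig-zag: t = node (node ll b lr) a r, b < x < a, splay x lr = node t1 c t2
      intro hb hx
      obtain ⟨hla, hra, ⟨hlb, hrb, hbll, hblr⟩, hbr⟩ := hb
      have hxlr : x ∈ keys lr := by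
        simp [keys] at hx
        rcases hx with hx | rfl | hx | rfl | hx
        · exact absurd (hlb x hx) (by omega)
        · exact absurd rfl h3
        · exact hx
        · exact absurd rfl h1
        · exact absurd (hra x hx) (by omega)
      have ihh := ih hblr hxlr
      rw [heq, Phi_node] at ihh
      have hWlr : W w t1 + w c + W w t2 = W w lr := by
        have := W_splay w x lr
        rw [heq, W_node] at this
        exact this
      rw [hWlr] at ihh
      have plr : 0 < W w lr := by
        rw [← hWlr]; linarith [wnn t1, wnn t2, hw c]
      simp [splay_node, h1, h2, h3, h4, heq, pathLen, Phi_node, W_node]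
      have f1 : lg (W w ll + w b + W w t1 + w c + (W w t2 + w a + W w r)) =
          lg (W w ll + w b + W w lr + w a + W w r) := by
        rw [show W w ll + w b + W w t1 + w c + (W w t2 + w a + W w r) =
          W w ll + w b + W w lr + w a + W w r by linarith]
      have f2 : 2 + lg (W w ll + w b + W w t1) + lg (W w t2 + w a + W w r) ≤
          2 * lg (W w ll + w b + W w lr + w a + W w r) :=
        lg_amgm (by linarith [wnn ll, wnn t1, hw b])
          (by linarith [wnn t2, wnn r, hw a])
          (by linarith [hw c])
      have f3 : lg (W w lr) ≤ lg (W w ll + w b + W w lr) :=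
        lg_mono plr (by linarith [wnn ll, hw b])
      have f4 : lg (W w lr) ≤ lg (W w ll + w b + W w lr + w a + W w r) :=
        lg_mono plr (by linarith [wnn ll, wnn r, hw b, hw a])
      push_cast
      linarith
  | case9 l a h1 h2 =>
      intro hb hx
      exfalso
      simp [keys] at hx
      rcases hx with hx | rfl
      · exact absurd (hb.1 x hx) (by omega)
      · exact h1 rfl
  | case10 l a h1 h2 rl rr =>
      -- zag: t = node l a (node rl x rr)
      intro hb hx
      simp [splay_node, h1, h2, pathLen, Phi_node, W_node]
      have f1 : lg (W w l + w a + W w rl + w x + W w rr) =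
          lg (W w l + w a + (W w rl + w x + W w rr)) := by ring_nf
      have f2 : lg (W w l + w a + W w rl) ≤ lg (W w l + w a + (W w rl + w x + W w rr)) :=
        lg_mono (by linarith [wnn l, wnn rl, hw a]) (by linarith [wnn rr, hw x])
      have f3 : lg (w x) ≤ lg (W w rl + w x + W w rr) :=
        lg_mono (hw x) (by linarith [wnn rl, wnn rr])
      have f4 : lg (w x) ≤ lg (W w l + w a + (W w rl + w x + W w rr)) :=
        lg_mono (hw x) (by linarith [wnn l, wnn rl, wnn rr, hw a])
      push_cast
      linarith
  | case11 l a h1 h2 rl b rr h3 h4 heq ih =>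
      intro hb hx
      exfalso
      obtain ⟨hla, hra, hbl, hlb, hrb, hbrl, hbrr⟩ := hb
      have hxrl : x ∈ keys rl := by
        simp [keys] at hx
        rcases hx with hx | rfl | hx | rfl | hx
        · exact absurd (hla x hx) (by omega)
        · exact absurd rfl h1
        · exact hx
        · exact absurd rfl h3
        · exact absurd (hrb x hx) (by omega)
      have := keys_splay x rl
      rw [heq] at this
      rw [← this] at hxrl
      simp [keys] at hxrl
  | case12 l a h1 h2 rl b rr h3 h4 t1 c t2 heq ih =>
      -- zag-zig: t = node l a (node rl b rr), a < x < b, splay x rl = node t1 c t2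
      intro hb hx
      obtain ⟨hla, hra, hbl, hlb, hrb, hbrl, hbrr⟩ := hb
      have hxrl : x ∈ keys rl := by
        simp [keys] at hx
        rcases hx with hx | rfl | hx | rfl | hx
        · exact absurd (hla x hx) (by omega)
        · exact absurd rfl h1
        · exact hx
        · exact absurd rfl h3
        · exact absurd (hrb x hx) (by omega)
      have ihh := ih hbrl hxrl
      rw [heq, Phi_node] at ihh
      have hWrl : W w t1 + w c + W w t2 = W w rl := by
        have := W_splay w x rl
        rw [heq, W_node] at this
        exact this
      rw [hWrl] at ihh
      have prl : 0 < W w rl := by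
        rw [← hWrl]; linarith [wnn t1, wnn t2, hw c]
      simp [splay_node, h1, h2, h3, h4, heq, pathLen, Phi_node, W_node]
      have f1 : lg (W w l + w a + W w t1 + w c + (W w t2 + w b + W w rr)) =
          lg (W w l + w a + (W w rl + w b + W w rr)) := by
        rw [show W w l + w a + W w t1 + w c + (W w t2 + w b + W w rr) =
          W w l + w a + (W w rl + w b + W w rr) by linarith]
      have f2 : 2 + lg (W w l + w a + W w t1) + lg (W w t2 + w b + W w rr) ≤
          2 * lg (W w l + w a + (W w rl + w b + W w rr)) :=
        lg_amgm (by linarith [wnn l, wnn t1, hw a])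
          (by linarith [wnn t2, wnn rr, hw b])
          (by linarith [hw c])
      have f3 : lg (W w rl) ≤ lg (W w rl + w b + W w rr) :=
        lg_mono prl (by linarith [wnn rr, hw b])
      have f4 : lg (W w rl) ≤ lg (W w l + w a + (W w rl + w b + W w rr)) :=
        lg_mono prl (by linarith [wnn l, wnn rr, hw a, hw b])
      push_cast
      linarith
  | case13 l a h1 h2 rl b rr h3 h4 heq ih =>
      intro hb hx
      exfalso
      obtain ⟨hla, hra, hbl, hlb, hrb, hbrl, hbrr⟩ := hb
      have hxrr : x ∈ keys rr := by
        simp [keys] at hx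
        rcases hx with hx | rfl | hx | rfl | hx
        · exact absurd (hla x hx) (by omega)
        · exact absurd rfl h1
        · exact absurd (hlb x hx) (by omega)
        · exact absurd rfl h3
        · exact hx
      have := keys_splay x rr
      rw [heq] at this
      rw [← this] at hxrr
      simp [keys] at hxrr
  | case14 l a h1 h2 rl b rr h3 h4 t1 c t2 heq ih =>
      -- zag-zag: t = node l a (node rl b rr), b < x, splay x rr = node t1 c t2
      intro hb hx
      obtain ⟨hla, hra, hbl, hlb, hrb, hbrl, hbrr⟩ := hb
      have hxrr : x ∈ keys rr := by
        simp [keys] at hx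
        rcases hx with hx | rfl | hx | rfl | hx
        · exact absurd (hla x hx) (by omega)
        · exact absurd rfl h1
        · exact absurd (hlb x hx) (by omega)
        · exact absurd rfl h3
        · exact hx
      have ihh := ih hbrr hxrr
      rw [heq, Phi_node] at ihh
      have hWrr : W w t1 + w c + W w t2 = W w rr := by
        have := W_splay w x rr
        rw [heq, W_node] at this
        exact this
      rw [hWrr] at ihh
      have prr : 0 < W w rr := by
        rw [← hWrr]; linarith [wnn t1, wnn t2, hw c]
      simp [splay_node, h1, h2, h3, h4, heq, pathLen, Phi_node, W_node]
      have f1 : lg (W w l + w a + W w rl + w b + W w t1 + w c + W w t2) =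
          lg (W w l + w a + (W w rl + w b + W w rr)) := by
        rw [show W w l + w a + W w rl + w b + W w t1 + w c + W w t2 =
          W w l + w a + (W w rl + w b + W w rr) by linarith]
      have f2 : 2 + lg (W w rr) + lg (W w l + w a + W w rl) ≤
          2 * lg (W w l + w a + (W w rl + w b + W w rr)) :=
        lg_amgm prr (by linarith [wnn l, wnn rl, hw a]) (by linarith [hw b])
      have f3 : lg (W w l + w a + W w rl + w b + W w t1) ≤
          lg (W w l + w a + (W w rl + w b + W w rr)) :=
        lg_mono (by linarith [wnn l, wnn rl, wnn t1, hw a, hw b])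
          (by linarith [wnn t2, hw c])
      have f4 : lg (W w rr) ≤ lg (W w rl + w b + W w rr) :=
        lg_mono prr (by linarith [wnn rl, hw b])
      push_cast
      linarith

end BST

namespace BST

theorem keys_foldl (seq : List ℕ) : ∀ t : BST,
    keys (seq.foldl (fun s x => splay x s) t) = keys t := by
  induction seq with
  | nil => intro t; rfl
  | cons y ys ih => intro t; rw [List.foldl_cons, ih, keys_splay]

theorem totalCost_bound (w : ℕ → ℝ) (hw : ∀ k, 0 < w k) :
    ∀ (seq : List ℕ) (t : BST), IsBST t → (∀ x ∈ seq, x ∈ keys t) →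
    (totalCost t seq : ℝ) + Phi w (seq.foldl (fun s x => splay x s) t) ≤
      Phi w t + (seq.map (fun x => 3 * (lg (W w t) - lg (w x)) + 2)).sum := by
  intro seq
  induction seq with
  | nil => intro t _ _; simp [totalCost]
  | cons y ys ih =>
      intro t hb hmem
      have h1 := amort w hw y t hb (hmem y (by simp))
      have h2 := ih (splay y t) (isBST_splay y hb)
        (fun x hx => by rw [keys_splay]; exact hmem x (by simp [hx]))
      rw [W_splay] at h2
      have e : totalCost t (y :: ys) = pathLen y t + totalCost (splay y t) ys := rfl
      rw [e, List.foldl_cons, List.map_cons, List.sum_cons]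
      push_cast
      linarith

theorem Phi_le {w : ℕ → ℝ} (hw : ∀ k, 0 < w k) (B : ℝ) :
    ∀ t : BST, W w t ≤ B → Phi w t ≤ ((keys t).length : ℝ) * lg B := by
  intro t
  induction t with
  | nil => intro _; simp [Phi, keys]
  | node l a r ihl ihr =>
      intro h
      rw [W_node] at h
      have wl := W_nonneg hw l
      have wr := W_nonneg hw r
      have hl := ihl (by linarith [hw a])
      have hr := ihr (by linarith [hw a])
      have hm : lg (W w l + w a + W w r) ≤ lg B :=
        lg_mono (by linarith [hw a]) h
      rw [Phi_node]
      have : ((keys (node l a r)).length : ℝ) =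
          ((keys l).length : ℝ) + 1 + ((keys r).length : ℝ) := by
        simp [keys]; push_cast; ring
      rw [this]
      nlinarith [hl, hr, hm]

theorem Phi_ge {w : ℕ → ℝ} (hw : ∀ k, 0 < w k) :
    ∀ t : BST, ((keys t).map (fun k => lg (w k))).sum ≤ Phi w t := by
  intro t
  induction t with
  | nil => simp [Phi, keys]
  | node l a r ihl ihr =>
      have wl := W_nonneg hw l
      have wr := W_nonneg hw r
      have hm : lg (w a) ≤ lg (W w l + w a + W w r) :=
        lg_mono (hw a) (by linarith)
      rw [Phi_node]
      simp only [keys, List.map_append, List.sum_append, List.map_cons,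
        List.sum_cons, List.map_nil, List.sum_nil]
      linarith

end BST



open BST in
/-- Splay tree static optimality: for any sequence of `m` accesses to the items
of a binary search tree in which each item `i` is accessed `qᵢ ≥ 1` times, the
total splay tree access cost is `O(m + ∑ᵢ qᵢ log (m / qᵢ))`; in particular
(balance theorem) the amortized cost per access is `O(log n)`, i.e. the total
cost is `O((m + n) (1 + log n))`. -/
theorem splay_static_optimality :
    ∃ c : ℝ, 0 < c ∧ ∀ (t : BST) (seq : List ℕ), IsBST t →
      (∀ x ∈ seq, x ∈ keys t) → (∀ k ∈ keys t, k ∈ seq) →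
      ((totalCost t seq : ℝ) ≤
        c * ((seq.length : ℝ) + ∑ k ∈ (keys t).toFinset,
          (seq.count k : ℝ) *
            Real.log ((seq.length : ℝ) / (seq.count k : ℝ)))) ∧
      ((totalCost t seq : ℝ) ≤
        c * (((seq.length : ℝ) + ((keys t).length : ℝ)) *
          (1 + Real.log ((keys t).length : ℝ)))) := by
  refine ⟨6, by norm_num, ?_⟩
  intro t seq hbst hmem hcov
  by_cases hseq : seq = []
  · subst hseq
    have hk : keys t = [] :=
      List.eq_nil_iff_forall_not_mem.mpr (fun k hkk => by simpa using hcov k hkk)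
    constructor <;> simp [hk, totalCost]
  have hmpos : 0 < seq.length := List.length_pos_iff.mpr hseq
  have hnodup : (keys t).Nodup := (sorted_keys hbst).nodup
  have hfin : seq.toFinset = (keys t).toFinset := by
    ext k
    simp only [List.mem_toFinset]
    exact ⟨fun h => hmem k h, fun h => hcov k h⟩
  have hsumq : ∑ k ∈ (keys t).toFinset, (seq.count k) = seq.length := by
    rw [← hfin]; exact List.sum_toFinset_count_eq_length seq
  have hcount_pos : ∀ k ∈ keys t, 0 < seq.count k :=
    fun k hk => List.count_pos_iff.mpr (hcov k hk)
  have hcount_le : ∀ k, seq.count k ≤ seq.length := fun k => List.count_le_length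
  have hlog2 : (2/3 : ℝ) ≤ Real.log 2 := by
    have := Real.log_two_gt_d9; norm_num at this ⊢; linarith
  have hlg1 : lg 1 = 0 := by simp [lg]
  constructor
  · -- static optimality bound
    set m : ℕ := seq.length with hm
    set w1 : ℕ → ℝ := fun k => if seq.count k = 0 then 1 else (seq.count k : ℝ) / m
      with hw1def
    have hw1 : ∀ k, 0 < w1 k := by
      intro k
      by_cases h0 : seq.count k = 0
      · simp [hw1def, h0]
      · simp only [hw1def, h0, if_false]
        exact div_pos (by exact_mod_cast Nat.pos_of_ne_zero h0) (by exact_mod_cast hmpos)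
    have hw1k : ∀ k ∈ keys t, w1 k = (seq.count k : ℝ) / m := by
      intro k hk; simp [hw1def, (hcount_pos k hk).ne']
    have hsumcast : ∑ k ∈ (keys t).toFinset, ((seq.count k : ℝ)) = (m : ℝ) := by
      rw [← hsumq]; push_cast; rfl
    have hW1 : W w1 t = 1 := by
      rw [W_eq_sum, ← List.sum_toFinset _ hnodup,
        Finset.sum_congr rfl (fun k hk => hw1k k (List.mem_toFinset.mp hk)),
        ← Finset.sum_div, hsumcast]
      field_simp
    set F := seq.foldl (fun s x => splay x s) t with hF
    have hbound := totalCost_bound w1 hw1 seq t hbst hmem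
    rw [← hF, hW1, hlg1] at hbound
    have hPhiT : Phi w1 t ≤ 0 := by
      have := Phi_le hw1 1 t (le_of_eq hW1)
      simpa [hlg1] using this
    have hPhiF : ((keys t).map (fun k => lg (w1 k))).sum ≤ Phi w1 F := by
      have := Phi_ge hw1 F; rwa [hF, keys_foldl] at this
    -- convert lg (w1 k)
    have hlgw : ∀ k ∈ keys t, lg (w1 k) =
        -(Real.log ((m : ℝ) / (seq.count k : ℝ)) / Real.log 2) := by
      intro k hk
      rw [hw1k k hk]
      unfold lg
      rw [show ((seq.count k : ℝ)) / m = ((m : ℝ) / (seq.count k : ℝ))⁻¹ by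
        rw [inv_div], Real.log_inv]
      ring
    have hLnn : ∀ k ∈ keys t, 0 ≤ Real.log ((m : ℝ) / (seq.count k : ℝ)) := by
      intro k hk
      apply Real.log_nonneg
      rw [le_div_iff₀ (by exact_mod_cast hcount_pos k hk), one_mul]
      exact_mod_cast hcount_le k
    -- list sum over keys → finset sum
    have hsum1 : ((keys t).map (fun k => lg (w1 k))).sum =
        ∑ k ∈ (keys t).toFinset,
          -(Real.log ((m : ℝ) / (seq.count k : ℝ)) / Real.log 2) := by
      rw [← List.sum_toFinset _ hnodup]
      exact Finset.sum_congr rfl (fun k hk => hlgw k (List.mem_toFinset.mp hk))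
    -- access-cost sum → finset sum
    have hsum2 : (seq.map (fun x => 3 * (0 - lg (w1 x)) + 2)).sum =
        ∑ k ∈ (keys t).toFinset, (seq.count k : ℝ) *
          (3 * (Real.log ((m : ℝ) / (seq.count k : ℝ)) / Real.log 2) + 2) := by
      rw [Finset.sum_list_map_count, hfin]
      refine Finset.sum_congr rfl (fun k hk => ?_)
      rw [hlgw k (List.mem_toFinset.mp hk), nsmul_eq_mul]
      ring
    rw [hsum2] at hbound
    have key : (totalCost t seq : ℝ) ≤
        ∑ k ∈ (keys t).toFinset, (Real.log ((m : ℝ) / (seq.count k : ℝ)) / Real.log 2)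
        + ∑ k ∈ (keys t).toFinset, (seq.count k : ℝ) *
            (3 * (Real.log ((m : ℝ) / (seq.count k : ℝ)) / Real.log 2) + 2) := by
      have := hsum1 ▸ hPhiF
      rw [Finset.sum_neg_distrib] at this
      linarith
    refine key.trans ?_
    rw [← Finset.sum_add_distrib,
      show (6 : ℝ) * ((m : ℝ) + ∑ k ∈ (keys t).toFinset,
          (seq.count k : ℝ) * Real.log ((m : ℝ) / (seq.count k : ℝ)))
        = ∑ k ∈ (keys t).toFinset, ((6 : ℝ) * (seq.count k : ℝ)
            + 6 * ((seq.count k : ℝ) * Real.log ((m : ℝ) / (seq.count k : ℝ)))) by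
        rw [Finset.sum_add_distrib, ← Finset.mul_sum, ← Finset.mul_sum, hsumcast]; ring]
    apply Finset.sum_le_sum
    intro k hk
    have hk' := List.mem_toFinset.mp hk
    have hq1 : (1 : ℝ) ≤ (seq.count k : ℝ) := by exact_mod_cast hcount_pos k hk'
    have hL := hLnn k hk'
    set L := Real.log ((m : ℝ) / (seq.count k : ℝ))
    have e1 : L / Real.log 2 ≤ (3/2) * L := by
      rw [div_le_iff₀ log2_pos]; nlinarith
    nlinarith [mul_le_mul_of_nonneg_left e1 (by linarith : (0:ℝ) ≤ (seq.count k : ℝ)),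
      mul_le_mul_of_nonneg_right hq1 (by linarith : (0:ℝ) ≤ (3/2) * L)]
  · -- balance bound
    set w2 : ℕ → ℝ := fun _ => 1 with hw2def
    have hw2 : ∀ k, 0 < w2 k := fun k => one_pos
    set n : ℕ := (keys t).length with hn
    have hnpos : 0 < n := by
      rcases seq with _ | ⟨y, ys⟩
      · exact absurd rfl hseq
      · have := hmem y (by simp)
        rw [hn]
        exact List.length_pos_iff.mpr (fun hnil => by simp [hnil] at this)
    have hW2 : W w2 t = (n : ℝ) := by
      rw [W_eq_sum]
      simp [hw2def, hn]
    set F := seq.foldl (fun s x => splay x s) t with hF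
    have hbound := totalCost_bound w2 hw2 seq t hbst hmem
    rw [← hF, hW2] at hbound
    have hPhiT : Phi w2 t ≤ (n : ℝ) * lg n := Phi_le hw2 _ t (le_of_eq hW2)
    have hPhiF : (0 : ℝ) ≤ Phi w2 F := by
      have := Phi_ge hw2 F
      rw [hF, keys_foldl] at this
      simpa [hw2def, hlg1] using this
    have hsum : (seq.map (fun x => 3 * (lg (n : ℝ) - lg (w2 x)) + 2)).sum =
        (seq.length : ℝ) * (3 * lg (n : ℝ) + 2) := by
      have hfun : (fun x : ℕ => 3 * (lg (n : ℝ) - lg (w2 x)) + 2) =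
          (fun _ : ℕ => 3 * lg (n : ℝ) + 2) := by
        funext x; simp [hw2def, hlg1]
      rw [hfun, List.map_const', List.sum_replicate, nsmul_eq_mul]
    rw [hsum] at hbound
    have hn1 : (1 : ℝ) ≤ (n : ℝ) := by exact_mod_cast hnpos
    have hm1 : (1 : ℝ) ≤ (seq.length : ℝ) := by exact_mod_cast hmpos
    have hLnn : (0 : ℝ) ≤ Real.log (n : ℝ) := Real.log_nonneg hn1
    have hlgnn : (0 : ℝ) ≤ lg (n : ℝ) := lg_nonneg hn1
    have hlgle : lg (n : ℝ) ≤ (3/2) * Real.log (n : ℝ) := by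
      unfold lg
      rw [div_le_iff₀ log2_pos]
      nlinarith
    have p1 : (n : ℝ) * lg (n : ℝ) ≤ (n : ℝ) * ((3/2) * Real.log (n : ℝ)) :=
      mul_le_mul_of_nonneg_left hlgle (by linarith)
    have p2 : (seq.length : ℝ) * (3 * lg (n : ℝ)) ≤
        (seq.length : ℝ) * (3 * ((3/2) * Real.log (n : ℝ))) := by
      apply mul_le_mul_of_nonneg_left _ (by linarith)
      linarith
    nlinarith [hbound, hPhiT, hPhiF, p1, p2, hLnn, hn1, hm1,
      mul_nonneg (by linarith : (0:ℝ) ≤ (n:ℝ)) hLnn,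
      mul_nonneg (by linarith : (0:ℝ) ≤ (seq.length:ℝ)) hLnn]
end
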